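/- arXiv:1612.05246 — 2 statements merged into one kernel-verified Lean document; each statement's English description precedes it below -/
import Mathlib

section
/- For every finite projective plane Π of order q, the number of ordered 6-arcs of Π is C_6(Π) = (q^2 + q + 1)(q^2 + q)q^2(q - 1)^2(q^2 - 5q + 6)(q^2 - 9q + 21). -/
open scoped Classical

structure ProjPlane (q : ℕ) where
  Point : Type
  fintypePoint : Fintype Point
  L : Set (Set Point)
  unique_line : ∀ p₁ p₂ : Point, p₁ ≠ p₂ → ∃! ℓ, ℓ ∈ L ∧ p₁ ∈ ℓ ∧ p₂ ∈ ℓ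
  unique_point : ∀ ℓ₁ ℓ₂, ℓ₁ ∈ L → ℓ₂ ∈ L → ℓ₁ ≠ ℓ₂ → ∃! p, p ∈ ℓ₁ ∧ p ∈ ℓ₂
  nondegenerate : ∃ a b c d : Point, a ≠ b ∧ a ≠ c ∧ a ≠ d ∧ b ≠ c ∧ b ≠ d ∧ c ≠ d ∧
    ∀ ℓ ∈ L, ¬({a, b, c} ⊆ ℓ) ∧ ¬({a, b, d} ⊆ ℓ) ∧ ¬({a, c, d} ⊆ ℓ) ∧ ¬({b, c, d} ⊆ ℓ)
  line_card : ∀ ℓ ∈ L, ℓ.ncard = q + 1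
  point_card : ∀ p : Point, {ℓ ∈ L | p ∈ ℓ}.ncard = q + 1

/-- A set of points is collinear if it is contained in a line. -/
noncomputable def ProjPlane.Collinear {q : ℕ} (Pl : ProjPlane q) (s : Set Pl.Point) : Prop :=
  ∃ ℓ ∈ Pl.L, s ⊆ ℓ

/-- The number of ordered `n`-arcs of the plane. -/
noncomputable def ProjPlane.nArcs {q : ℕ} (Pl : ProjPlane q) (n : ℕ) : ℕ :=
  Nat.card {p : Fin n → Pl.Point // Function.Injective p ∧
    ∀ i j k : Fin n, i ≠ j → i ≠ k → j ≠ k → ¬ Pl.Collinear {p i, p j, p k}}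

/-- Number of ordered strong realizations of the Fano plane. -/
noncomputable def ProjPlane.A7 {q : ℕ} (Pl : ProjPlane q) : ℕ :=
  Nat.card {p : ZMod 7 → Pl.Point // Function.Injective p ∧
    ∃ σ : Equiv.Perm (ZMod 7), ∀ i j k : ZMod 7, i ≠ j → i ≠ k → j ≠ k →
      (Pl.Collinear {p (σ i), p (σ j), p (σ k)} ↔
        ∃ a : ZMod 7, ({i, j, k} : Set (ZMod 7)) = {a, a + 1, a + 3})}

/-- Number of ordered strong realizations of the Möbius–Kantor configuration. -/
noncomputable def ProjPlane.A8 {q : ℕ} (Pl : ProjPlane q) : ℕ :=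
  Nat.card {p : ZMod 8 → Pl.Point // Function.Injective p ∧
    ∃ σ : Equiv.Perm (ZMod 8), ∀ i j k : ZMod 8, i ≠ j → i ≠ k → j ≠ k →
      (Pl.Collinear {p (σ i), p (σ j), p (σ k)} ↔
        ∃ a : ZMod 8, ({i, j, k} : Set (ZMod 8)) = {a, a + 1, a + 3})}

namespace ProjPlane
variable {q : ℕ} (Pl : ProjPlane q)

attribute [local instance] ProjPlane.fintypePoint

noncomputable def lineThrough (a b : Pl.Point) : Set Pl.Point :=
  if h : a ≠ b then (Pl.unique_line a b h).choose else ∅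

variable {Pl}

lemma lineThrough_spec {a b : Pl.Point} (h : a ≠ b) :
    Pl.lineThrough a b ∈ Pl.L ∧ a ∈ Pl.lineThrough a b ∧ b ∈ Pl.lineThrough a b := by
  rw [lineThrough, dif_pos h]
  exact (Pl.unique_line a b h).choose_spec.1

lemma lineThrough_mem_L {a b : Pl.Point} (h : a ≠ b) : Pl.lineThrough a b ∈ Pl.L :=
  (lineThrough_spec h).1

lemma left_mem_lineThrough {a b : Pl.Point} (h : a ≠ b) : a ∈ Pl.lineThrough a b :=
  (lineThrough_spec h).2.1

lemma right_mem_lineThrough {a b : Pl.Point} (h : a ≠ b) : b ∈ Pl.lineThrough a b :=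
  (lineThrough_spec h).2.2

lemma lineThrough_unique {a b : Pl.Point} (h : a ≠ b) {ℓ : Set Pl.Point}
    (hL : ℓ ∈ Pl.L) (ha : a ∈ ℓ) (hb : b ∈ ℓ) : ℓ = Pl.lineThrough a b := by
  rw [lineThrough, dif_pos h]
  exact (Pl.unique_line a b h).choose_spec.2 ℓ ⟨hL, ha, hb⟩

lemma lineThrough_symm {a b : Pl.Point} (h : a ≠ b) :
    Pl.lineThrough a b = Pl.lineThrough b a :=
  lineThrough_unique h.symm (lineThrough_mem_L h) (right_mem_lineThrough h)
    (left_mem_lineThrough h)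

/-- Two distinct lines meet in exactly one point. -/
lemma inter_lines {ℓ₁ ℓ₂ : Set Pl.Point} (h1 : ℓ₁ ∈ Pl.L) (h2 : ℓ₂ ∈ Pl.L) (h : ℓ₁ ≠ ℓ₂) :
    (ℓ₁ ∩ ℓ₂).ncard = 1 := by
  obtain ⟨x, hx, hu⟩ := Pl.unique_point ℓ₁ ℓ₂ h1 h2 h
  rw [Set.ncard_eq_one]
  exact ⟨x, Set.eq_singleton_iff_unique_mem.2 ⟨hx, fun y hy => hu y hy⟩⟩

lemma card_point : Nat.card Pl.Point = q ^ 2 + q + 1 := by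
  obtain ⟨a, -, -, -, -, -, -, -, -⟩ := Pl.nondegenerate
  classical
  set LS : Set (Set Pl.Point) := {ℓ ∈ Pl.L | a ∈ ℓ} with hLS
  have hLScard : LS.toFinset.card = q + 1 := by
    rw [← Set.ncard_eq_toFinset_card']; exact Pl.point_card a
  set t : Set Pl.Point → Finset Pl.Point := fun ℓ => (ℓ \ {a}).toFinset with ht
  have hmem : ∀ ℓ ∈ LS.toFinset, ℓ ∈ Pl.L ∧ a ∈ ℓ := by
    intro ℓ h; rwa [Set.mem_toFinset] at h
  have hcover : (Finset.univ : Finset Pl.Point) = insert a (LS.toFinset.biUnion t) := by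
    ext x
    simp only [Finset.mem_univ, true_iff, Finset.mem_insert, Finset.mem_biUnion,
      Set.mem_toFinset, Set.mem_diff, Set.mem_singleton_iff, ht]
    by_cases hxa : x = a
    · exact Or.inl hxa
    · exact Or.inr ⟨Pl.lineThrough a x, ⟨lineThrough_mem_L (Ne.symm hxa),
        left_mem_lineThrough (Ne.symm hxa)⟩, right_mem_lineThrough (Ne.symm hxa), hxa⟩
  have hdisj : ∀ ℓ₁ ∈ LS.toFinset, ∀ ℓ₂ ∈ LS.toFinset, ℓ₁ ≠ ℓ₂ → Disjoint (t ℓ₁) (t ℓ₂) := by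
    intro ℓ₁ h1 ℓ₂ h2 hne
    obtain ⟨hL1, ha1⟩ := hmem ℓ₁ h1
    obtain ⟨hL2, ha2⟩ := hmem ℓ₂ h2
    refine Finset.disjoint_left.2 fun x hx1 hx2 => ?_
    rw [ht, Set.mem_toFinset, Set.mem_diff, Set.mem_singleton_iff] at hx1 hx2
    obtain ⟨y, -, hu⟩ := Pl.unique_point ℓ₁ ℓ₂ hL1 hL2 hne
    exact hx1.2 ((hu x ⟨hx1.1, hx2.1⟩).trans (hu a ⟨ha1, ha2⟩).symm)
  have hcardeach : ∀ ℓ ∈ LS.toFinset, (t ℓ).card = q := by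
    intro ℓ h
    obtain ⟨hL, ha⟩ := hmem ℓ h
    have h1 : (ℓ \ {a}).ncard = ℓ.ncard - 1 := Set.ncard_diff_singleton_of_mem ha
    have h2 : (ℓ \ {a}).ncard = (t ℓ).card := Set.ncard_eq_toFinset_card' _
    rw [Pl.line_card ℓ hL] at h1
    omega
  have hanot : a ∉ LS.toFinset.biUnion t := by
    simp only [Finset.mem_biUnion, ht, Set.mem_toFinset, Set.mem_diff, Set.mem_singleton_iff,
      not_exists]
    intro ℓ h; exact h.2.2 trivial
  have : (Finset.univ : Finset Pl.Point).card = 1 + (q + 1) * q := by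
    rw [hcover, Finset.card_insert_of_notMem hanot, Finset.card_biUnion hdisj,
      Finset.sum_congr rfl hcardeach, Finset.sum_const, hLScard, smul_eq_mul]
    ring
  rw [Nat.card_eq_fintype_card, ← Finset.card_univ, this]; ring

section Arc
variable {n : ℕ}

/-- The line through the two points indexed by a 2-element subset. -/
noncomputable def pairLine (Pl : ProjPlane q) (p : Fin n → Pl.Point) (e : Finset (Fin n)) :
    Set Pl.Point :=
  if h : ∃ i j : Fin n, i ≠ j ∧ e = {i, j} then
    Pl.lineThrough (p h.choose) (p h.choose_spec.choose) else ∅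

variable {Pl : ProjPlane q} {p : Fin n → Pl.Point}

lemma pairLine_spec {e : Finset (Fin n)} (h : e.card = 2) :
    ∃ i j : Fin n, i ≠ j ∧ e = {i, j} ∧
      Pl.pairLine p e = Pl.lineThrough (p i) (p j) := by
  obtain ⟨i, j, hij, he⟩ := Finset.card_eq_two.mp h
  have hex : ∃ i j : Fin n, i ≠ j ∧ e = {i, j} := ⟨i, j, hij, he⟩
  refine ⟨hex.choose, hex.choose_spec.choose, hex.choose_spec.choose_spec.1,
    hex.choose_spec.choose_spec.2, ?_⟩
  rw [pairLine, dif_pos hex]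

section
variable (hp : Function.Injective p)
  (harc : ∀ i j k : Fin n, i ≠ j → i ≠ k → j ≠ k → ¬ Pl.Collinear {p i, p j, p k})
include hp harc

lemma notMem_lineThrough {i j k : Fin n} (hij : i ≠ j) (hik : i ≠ k) (hjk : j ≠ k) :
    p k ∉ Pl.lineThrough (p i) (p j) := by
  intro hmem
  refine harc i j k hij hik hjk ⟨Pl.lineThrough (p i) (p j),
    lineThrough_mem_L (hp.ne hij), ?_⟩
  intro x hx
  simp only [Set.mem_insert_iff, Set.mem_singleton_iff] at hx
  rcases hx with rfl | rfl | rfl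
  · exact left_mem_lineThrough (hp.ne hij)
  · exact right_mem_lineThrough (hp.ne hij)
  · exact hmem

lemma pairLine_eq {i j : Fin n} (hij : i ≠ j) :
    Pl.pairLine p ({i, j} : Finset (Fin n)) = Pl.lineThrough (p i) (p j) := by
  have hc : ({i, j} : Finset (Fin n)).card = 2 := by
    rw [Finset.card_insert_of_notMem (by simpa using hij), Finset.card_singleton]
  obtain ⟨a, b, hab, he, hline⟩ := pairLine_spec hc
  have hi : i ∈ ({a, b} : Finset (Fin n)) := by rw [← he]; simp
  have hj : j ∈ ({a, b} : Finset (Fin n)) := by rw [← he]; simp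
  simp only [Finset.mem_insert, Finset.mem_singleton] at hi hj
  rw [hline]
  rcases hi with rfl | rfl
  · rcases hj with rfl | rfl
    · exact absurd rfl hij
    · rfl
  · rcases hj with rfl | rfl
    · exact lineThrough_symm (hp.ne hab)
    · exact absurd rfl hij

lemma pairLine_mem_L {e : Finset (Fin n)} (h : e.card = 2) : Pl.pairLine p e ∈ Pl.L := by
  obtain ⟨i, j, hij, -, hline⟩ := pairLine_spec h
  rw [hline]; exact lineThrough_mem_L (hp.ne hij)

lemma mem_pairLine_of_mem {e : Finset (Fin n)} (h : e.card = 2) {k : Fin n} (hk : k ∈ e) :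
    p k ∈ Pl.pairLine p e := by
  obtain ⟨i, j, hij, he, hline⟩ := pairLine_spec h
  subst he
  simp only [Finset.mem_insert, Finset.mem_singleton] at hk
  rw [hline]
  rcases hk with rfl | rfl
  · exact left_mem_lineThrough (hp.ne hij)
  · exact right_mem_lineThrough (hp.ne hij)

lemma notMem_pairLine {e : Finset (Fin n)} (h : e.card = 2) {k : Fin n} (hk : k ∉ e) :
    p k ∉ Pl.pairLine p e := by
  obtain ⟨i, j, hij, he, hline⟩ := pairLine_spec h
  subst he
  simp only [Finset.mem_insert, Finset.mem_singleton, not_or] at hk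
  rw [hline]
  exact notMem_lineThrough hp harc hij (Ne.symm hk.1) (Ne.symm hk.2)

lemma mem_pairLine_iff {e : Finset (Fin n)} (h : e.card = 2) (k : Fin n) :
    p k ∈ Pl.pairLine p e ↔ k ∈ e := by
  constructor
  · intro hm; by_contra hk; exact notMem_pairLine hp harc h hk hm
  · exact mem_pairLine_of_mem hp harc h

lemma pairLine_inj {e f : Finset (Fin n)} (he : e.card = 2) (hf : f.card = 2)
    (h : Pl.pairLine p e = Pl.pairLine p f) : e = f := by
  by_contra hne
  have hns : ¬ f ⊆ e := fun hsub => hne (Finset.eq_of_subset_of_card_le hsub (by omega)).symm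
  obtain ⟨k, hkf, hke⟩ := Finset.not_subset.mp hns
  exact notMem_pairLine hp harc he hke (h ▸ mem_pairLine_of_mem hp harc hf hkf)

/-- Two secants through a common non-arc point must be index-disjoint. -/
lemma disjoint_of_mem_two {x : Pl.Point} (hx : x ∉ Set.range p)
    {e f : Finset (Fin n)} (he : e.card = 2) (hf : f.card = 2) (hef : e ≠ f)
    (hxe : x ∈ Pl.pairLine p e) (hxf : x ∈ Pl.pairLine p f) : Disjoint e f := by
  rw [Finset.disjoint_left]
  intro i hie hif
  have hxp : p i ≠ x := fun hh => hx ⟨i, hh⟩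
  have hlne : Pl.pairLine p e ≠ Pl.pairLine p f := fun hh => hef (pairLine_inj hp harc he hf hh)
  obtain ⟨ℓ, -, hu⟩ := Pl.unique_line (p i) x hxp
  have h1 := hu _ ⟨pairLine_mem_L hp harc he, mem_pairLine_of_mem hp harc he hie, hxe⟩
  have h2 := hu _ ⟨pairLine_mem_L hp harc hf, mem_pairLine_of_mem hp harc hf hif, hxf⟩
  exact hlne (h1.trans h2.symm)

lemma deg_le_two (hn5 : n ≤ 5) {x : Pl.Point} (hx : x ∉ Set.range p)
    {e f g : Finset (Fin n)} (he : e.card = 2) (hf : f.card = 2) (hg : g.card = 2)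
    (hef : e ≠ f) (heg : e ≠ g) (hfg : f ≠ g)
    (hxe : x ∈ Pl.pairLine p e) (hxf : x ∈ Pl.pairLine p f) (hxg : x ∈ Pl.pairLine p g) :
    False := by
  have d1 := disjoint_of_mem_two hp harc hx he hf hef hxe hxf
  have d2 := disjoint_of_mem_two hp harc hx he hg heg hxe hxg
  have d3 := disjoint_of_mem_two hp harc hx hf hg hfg hxf hxg
  have hcard : (e ∪ f ∪ g).card = 6 := by
    rw [Finset.card_union_of_disjoint (by
      rw [Finset.disjoint_union_left]; exact ⟨d2, d3⟩),
      Finset.card_union_of_disjoint d1, he, hf, hg]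
  have hle : (e ∪ f ∪ g).card ≤ Fintype.card (Fin n) := Finset.card_le_univ _
  rw [hcard, Fintype.card_fin] at hle
  omega


set_option maxHeartbeats 1000000 in
lemma good_count (hn2 : 2 ≤ n) (hn5 : n ≤ 5) :
    2 * ((Finset.univ.filter (fun x : Pl.Point =>
        ∀ e : Finset (Fin n), e.card = 2 → x ∉ Pl.pairLine p e)).card : ℤ) =
      2 * ((q:ℤ)^2 + q + 1) - 2*(n:ℤ) - 2*((n.choose 2 : ℕ):ℤ)*((q:ℤ)+1)
        + ((n.choose 2 : ℕ):ℤ)*(((n.choose 2:ℕ):ℤ) - 1)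
        + (n:ℤ)*(2*((n:ℤ)-1) - ((n:ℤ)-1)*((n:ℤ)-2)) := by
  classical
  set E : Finset (Finset (Fin n)) := Finset.univ.powersetCard 2 with hE
  have hmemE : ∀ e : Finset (Fin n), e ∈ E ↔ e.card = 2 := by
    intro e; simp [hE, Finset.mem_powersetCard]
  have hEcard : E.card = n.choose 2 := by
    rw [hE, Finset.card_powersetCard, Finset.card_univ, Fintype.card_fin]
  set SF : Finset (Fin n) → Finset Pl.Point :=
    fun e => (Set.toFinite (Pl.pairLine p e)).toFinset with hSF
  have hmemSF : ∀ e x, x ∈ SF e ↔ x ∈ Pl.pairLine p e := fun e x => Set.Finite.mem_toFinset _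
  have hSFcard : ∀ e ∈ E, (SF e).card = q + 1 := by
    intro e he
    rw [hSF, ← Set.ncard_eq_toFinset_card]
    exact Pl.line_card _ (pairLine_mem_L hp harc ((hmemE e).1 he))
  have hSFinter : ∀ e ∈ E, ∀ f ∈ E, e ≠ f → (SF e ∩ SF f).card = 1 := by
    intro e he f hf hef
    have hne : Pl.pairLine p e ≠ Pl.pairLine p f := fun hh =>
      hef (pairLine_inj hp harc ((hmemE e).1 he) ((hmemE f).1 hf) hh)
    obtain ⟨x, hx, hu⟩ := Pl.unique_point _ _ (pairLine_mem_L hp harc ((hmemE e).1 he))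
      (pairLine_mem_L hp harc ((hmemE f).1 hf)) hne
    rw [Finset.card_eq_one]
    refine ⟨x, ?_⟩
    ext y
    simp only [Finset.mem_inter, hmemSF, Finset.mem_singleton]
    exact ⟨fun hy => hu y hy, fun hy => hy ▸ hx⟩
  set deg : Pl.Point → ℕ := fun x => (E.filter (fun e => x ∈ SF e)).card with hdeg
  have hsum1 : ∑ x : Pl.Point, deg x = n.choose 2 * (q + 1) := by
    have h : ∑ x : Pl.Point, deg x = ∑ e ∈ E, (SF e).card := by
      simp only [hdeg, Finset.card_filter]
      rw [Finset.sum_comm]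
      refine Finset.sum_congr rfl fun e _ => ?_
      rw [← Finset.card_filter, Finset.filter_univ_mem]
    rw [h, Finset.sum_congr rfl hSFcard, Finset.sum_const, hEcard, smul_eq_mul]
  have hsum2 : ∑ x : Pl.Point, (deg x * deg x - deg x) = n.choose 2 * n.choose 2 - n.choose 2 := by
    have h1 : ∀ x : Pl.Point, deg x * deg x - deg x
        = (E.offDiag.filter (fun z => x ∈ SF z.1 ∧ x ∈ SF z.2)).card := by
      intro x
      rw [hdeg, ← Finset.offDiag_card]
      congr 1
      ext z
      simp only [Finset.mem_offDiag, Finset.mem_filter]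
      tauto
    have h2 : ∀ z ∈ E.offDiag,
        (Finset.univ.filter (fun x : Pl.Point => x ∈ SF z.1 ∧ x ∈ SF z.2)).card = 1 := by
      intro z hz
      rw [Finset.mem_offDiag] at hz
      rw [show Finset.univ.filter (fun x : Pl.Point => x ∈ SF z.1 ∧ x ∈ SF z.2)
          = SF z.1 ∩ SF z.2 by ext x; simp [Finset.mem_inter]]
      exact hSFinter _ hz.1 _ hz.2.1 hz.2.2
    calc ∑ x : Pl.Point, (deg x * deg x - deg x)
        = ∑ x : Pl.Point, (E.offDiag.filter (fun z => x ∈ SF z.1 ∧ x ∈ SF z.2)).card :=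
          Finset.sum_congr rfl (fun x _ => h1 x)
      _ = ∑ z ∈ E.offDiag, (Finset.univ.filter
            (fun x : Pl.Point => x ∈ SF z.1 ∧ x ∈ SF z.2)).card := by
          simp only [Finset.card_filter]
          exact Finset.sum_comm
      _ = ∑ _z ∈ E.offDiag, 1 := Finset.sum_congr rfl h2
      _ = E.offDiag.card := by rw [Finset.sum_const, smul_eq_mul, mul_one]
      _ = n.choose 2 * n.choose 2 - n.choose 2 := by rw [Finset.offDiag_card, hEcard]
  have hdegarc : ∀ k : Fin n, deg (p k) = n - 1 := by
    intro k
    have hfe : E.filter (fun e => p k ∈ SF e) = E.filter (fun e => k ∈ e) := by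
      apply Finset.filter_congr
      intro e he
      rw [hmemSF]
      exact ⟨fun h => (mem_pairLine_iff hp harc ((hmemE e).1 he) k).1 h,
        fun h => (mem_pairLine_iff hp harc ((hmemE e).1 he) k).2 h⟩
    have himg : E.filter (fun e => k ∈ e)
        = (Finset.univ.erase k).image (fun j => ({k, j} : Finset (Fin n))) := by
      ext e
      simp only [Finset.mem_filter, Finset.mem_image, Finset.mem_erase, Finset.mem_univ,
        and_true]
      rw [hmemE]
      constructor
      · rintro ⟨he2, hke⟩
        obtain ⟨a, b, hab, rfl⟩ := Finset.card_eq_two.mp he2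
        have hk' : k = a ∨ k = b := by simpa using hke
        rcases hk' with rfl | rfl
        · exact ⟨b, Ne.symm hab, rfl⟩
        · exact ⟨a, hab, by rw [Finset.pair_comm]⟩
      · rintro ⟨j, hjk, rfl⟩
        exact ⟨Finset.card_pair (Ne.symm hjk), by simp⟩
    have hinj : Set.InjOn (fun j => ({k, j} : Finset (Fin n))) (Finset.univ.erase k : Finset (Fin n)) := by
      intro j hj j' hj' hjj
      have hjk : j ≠ k := by
        simp only [Finset.mem_coe, Finset.mem_erase] at hj
        exact hj.1
      have hjj2 : ({k, j} : Finset (Fin n)) = {k, j'} := hjj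
      have hmem : j ∈ ({k, j'} : Finset (Fin n)) := by rw [← hjj2]; simp
      simp only [Finset.mem_insert, Finset.mem_singleton] at hmem
      rcases hmem with h | h
      · exact absurd h hjk
      · exact h
    simp only [hdeg]
    rw [hfe, himg, Finset.card_image_of_injOn hinj,
      Finset.card_erase_of_mem (Finset.mem_univ k), Finset.card_univ, Fintype.card_fin]
  have hdegle : ∀ x : Pl.Point, x ∉ Set.range p → deg x ≤ 2 := by
    intro x hx
    by_contra hgt
    have hdx : deg x = (E.filter (fun e => x ∈ SF e)).card := by simp only [hdeg]
    have h3 : 2 < (E.filter (fun e => x ∈ SF e)).card := by omega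
    obtain ⟨e, he, f, hf, g, hg, hef, heg, hfg⟩ := Finset.two_lt_card.mp h3
    rw [Finset.mem_filter] at he hf hg
    exact deg_le_two hp harc hn5 hx ((hmemE _).1 he.1) ((hmemE _).1 hf.1) ((hmemE _).1 hg.1)
      hef heg hfg ((hmemSF _ _).1 he.2) ((hmemSF _ _).1 hf.2) ((hmemSF _ _).1 hg.2)
  set U : Finset Pl.Point := E.biUnion SF with hU
  have hmemU : ∀ x, x ∈ U ↔ 1 ≤ deg x := by
    intro x
    have hdx : deg x = (E.filter (fun e => x ∈ SF e)).card := by simp only [hdeg]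
    rw [hU, Finset.mem_biUnion, hdx]
    constructor
    · rintro ⟨e, he, hxe⟩
      have hmm : e ∈ E.filter (fun e => x ∈ SF e) := Finset.mem_filter.2 ⟨he, hxe⟩
      have := Finset.card_pos.2 ⟨e, hmm⟩
      omega
    · intro h
      obtain ⟨e, he⟩ := Finset.card_pos.1 (show 0 < (E.filter (fun e => x ∈ SF e)).card by omega)
      rw [Finset.mem_filter] at he
      exact ⟨e, he.1, he.2⟩
  set A : Finset Pl.Point := Finset.univ.image p with hA
  have hAcard : A.card = n := by
    rw [hA, Finset.card_image_of_injective _ hp, Finset.card_univ, Fintype.card_fin]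
  have hAU : A ⊆ U := by
    intro x hx
    rw [hA, Finset.mem_image] at hx
    obtain ⟨k, -, rfl⟩ := hx
    obtain ⟨j, hj⟩ : ∃ j : Fin n, j ≠ k := by
      refine Fintype.exists_ne_of_one_lt_card ?_ k
      rw [Fintype.card_fin]; omega
    have hcard : ({k, j} : Finset (Fin n)).card = 2 := Finset.card_pair (Ne.symm hj)
    exact Finset.mem_biUnion.2 ⟨{k, j}, (hmemE _).2 hcard,
      (hmemSF _ _).2 (mem_pairLine_of_mem hp harc hcard (by simp))⟩
  have htotal : (Finset.univ : Finset Pl.Point).card = q^2 + q + 1 := by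
    rw [Finset.card_univ, ← Nat.card_eq_fintype_card, card_point]
  have hgoodU : Finset.univ.filter (fun x : Pl.Point =>
      ∀ e : Finset (Fin n), e.card = 2 → x ∉ Pl.pairLine p e) = Finset.univ \ U := by
    ext x
    simp only [Finset.mem_filter, Finset.mem_sdiff, Finset.mem_univ, true_and]
    rw [hU, Finset.mem_biUnion]
    push_neg
    constructor
    · intro h e he hx
      exact h e ((hmemE e).1 he) ((hmemSF e x).1 hx)
    · intro h e he hx
      exact h e ((hmemE e).2 he) ((hmemSF e x).2 hx)
  -- integer arithmetic
  set m : ℤ := ((n.choose 2 : ℕ) : ℤ) with hm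
  set D : Pl.Point → ℤ := fun x => (deg x : ℤ) with hD
  have castsub : ∀ a : ℕ, ((a * a - a : ℕ) : ℤ) = (a:ℤ)*(a:ℤ) - (a:ℤ) := by
    intro a
    have h : a ≤ a * a := by
      cases a with
      | zero => simp
      | succ b => exact Nat.le_mul_of_pos_left _ (Nat.succ_pos b)
    rw [Nat.cast_sub h, Nat.cast_mul]
  have hS1 : ∑ x : Pl.Point, D x = m * ((q:ℤ) + 1) := by
    rw [hD, hm, ← Nat.cast_sum]
    rw [hsum1]; push_cast; ring
  have hS2 : ∑ x : Pl.Point, (D x * D x - D x) = m * m - m := by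
    have : ∑ x : Pl.Point, (D x * D x - D x) = ((∑ x : Pl.Point, (deg x * deg x - deg x) : ℕ) : ℤ) := by
      rw [Nat.cast_sum]
      exact (Finset.sum_congr rfl fun x _ => (castsub (deg x)).symm)
    rw [this, hsum2, castsub]
  have hT : ∑ x : Pl.Point, (2 * D x - (D x * D x - D x)) = 2*m*((q:ℤ)+1) - (m*m - m) := by
    rw [Finset.sum_sub_distrib, ← Finset.mul_sum, hS1, hS2]
    ring
  have hDarc : ∀ k : Fin n, D (p k) = (n:ℤ) - 1 := by
    intro k
    rw [hD]
    simp only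
    rw [hdegarc k, Nat.cast_sub (by omega), Nat.cast_one]
  have hSA : ∑ x ∈ A, (2 * D x - (D x * D x - D x))
      = (n:ℤ) * (2*((n:ℤ)-1) - (((n:ℤ)-1)*((n:ℤ)-1) - ((n:ℤ)-1))) := by
    rw [hA, Finset.sum_image (fun x _ y _ h => hp h)]
    rw [Finset.sum_congr rfl (fun k _ => by rw [hDarc k])]
    rw [Finset.sum_const, Finset.card_univ, Fintype.card_fin, nsmul_eq_mul]
  have hsplit : ∑ x ∈ Finset.univ \ A, (2 * D x - (D x * D x - D x))
      = 2*m*((q:ℤ)+1) - (m*m - m)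
        - (n:ℤ) * (2*((n:ℤ)-1) - (((n:ℤ)-1)*((n:ℤ)-1) - ((n:ℤ)-1))) := by
    have := Finset.sum_sdiff (f := fun x => 2 * D x - (D x * D x - D x))
      (Finset.subset_univ A)
    rw [hSA, hT] at this
    linarith
  have hpoint : ∀ x ∈ Finset.univ \ A,
      (if x ∈ U then (2:ℤ) else 0) = 2 * D x - (D x * D x - D x) := by
    intro x hx
    have hxr : x ∉ Set.range p := by
      rw [Finset.mem_sdiff] at hx
      rintro ⟨k, rfl⟩
      exact hx.2 (Finset.mem_image.2 ⟨k, Finset.mem_univ k, rfl⟩)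
    have h2 := hdegle x hxr
    have h1 := hmemU x
    by_cases hxU : x ∈ U
    · have hge : 1 ≤ deg x := h1.1 hxU
      rw [if_pos hxU]
      have : deg x = 1 ∨ deg x = 2 := by omega
      rcases this with h | h <;> rw [hD] <;> simp only <;> rw [h] <;> norm_num
    · have h0 : deg x = 0 := by
        by_contra hh
        exact hxU (h1.2 (by omega))
      rw [if_neg hxU, hD]
      simp only
      rw [h0]
      norm_num
  have hUA : 2 * (((U \ A).card : ℕ) : ℤ) = ∑ x ∈ Finset.univ \ A, (if x ∈ U then (2:ℤ) else 0) := by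
    rw [Finset.sum_ite_mem]
    have : (Finset.univ \ A) ∩ U = U \ A := by
      ext x
      simp only [Finset.mem_inter, Finset.mem_sdiff, Finset.mem_univ, true_and]
      tauto
    rw [this, Finset.sum_const, nsmul_eq_mul]
    ring
  have hUcard : ((U.card : ℕ) : ℤ)
      = (n:ℤ) + ((U \ A).card : ℤ) := by
    have := Finset.card_sdiff_add_card_eq_card hAU
    have hc : ((U \ A).card : ℤ) + ((A.card : ℕ) : ℤ) = ((U.card : ℕ) : ℤ) := by
      exact_mod_cast congrArg (Nat.cast : ℕ → ℤ) this
    rw [hAcard] at hc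
    linarith
  have hcompl : ((Finset.univ \ U).card : ℤ) = ((q:ℤ)^2 + (q:ℤ) + 1) - (U.card : ℤ) := by
    rw [Finset.card_sdiff_of_subset (Finset.subset_univ U)]
    have hle : U.card ≤ (Finset.univ : Finset Pl.Point).card := Finset.card_le_univ U
    rw [Nat.cast_sub hle, htotal]
    push_cast
    ring
  rw [hgoodU, hcompl]
  have hfin : 2 * ((U \ A).card : ℤ)
      = 2*m*((q:ℤ)+1) - (m*m - m)
        - (n:ℤ) * (2*((n:ℤ)-1) - (((n:ℤ)-1)*((n:ℤ)-1) - ((n:ℤ)-1))) := by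
    rw [hUA, Finset.sum_congr rfl hpoint, hsplit]
  linear_combination (-2 : ℤ) * hUcard - hfin


lemma snoc_arc_iff (hn2 : 2 ≤ n) (x : Pl.Point) :
    (Function.Injective (Fin.snoc p x : Fin (n+1) → Pl.Point) ∧
      ∀ i j k : Fin (n+1), i ≠ j → i ≠ k → j ≠ k →
        ¬ Pl.Collinear {(Fin.snoc p x : Fin (n+1) → Pl.Point) i,
          (Fin.snoc p x : Fin (n+1) → Pl.Point) j,
          (Fin.snoc p x : Fin (n+1) → Pl.Point) k}) ↔
    ∀ e : Finset (Fin n), e.card = 2 → x ∉ Pl.pairLine p e := by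
  constructor
  · rintro ⟨-, H⟩ e he hx
    obtain ⟨i, j, hij, -, hline⟩ := pairLine_spec he
    rw [hline] at hx
    refine H i.castSucc j.castSucc (Fin.last n)
      (fun h => hij (Fin.castSucc_injective n h))
      (Fin.castSucc_lt_last i).ne (Fin.castSucc_lt_last j).ne ?_
    refine ⟨Pl.lineThrough (p i) (p j), lineThrough_mem_L (hp.ne hij), ?_⟩
    intro y hy
    simp only [Set.mem_insert_iff, Set.mem_singleton_iff, Fin.snoc_castSucc,
      Fin.snoc_last] at hy
    rcases hy with rfl | rfl | rfl
    · exact left_mem_lineThrough (hp.ne hij)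
    · exact right_mem_lineThrough (hp.ne hij)
    · exact hx
  · intro hgood
    have hxr : x ∉ Set.range p := by
      rintro ⟨k, rfl⟩
      obtain ⟨j, hj⟩ : ∃ j : Fin n, j ≠ k := by
        refine Fintype.exists_ne_of_one_lt_card ?_ k
        rw [Fintype.card_fin]; omega
      have hc : ({k, j} : Finset (Fin n)).card = 2 := Finset.card_pair (Ne.symm hj)
      exact hgood _ hc (mem_pairLine_of_mem hp harc hc (by simp))
    constructor
    · intro a b hab
      rcases Fin.eq_castSucc_or_eq_last a with ⟨a', rfl⟩ | rfl <;>
        rcases Fin.eq_castSucc_or_eq_last b with ⟨b', rfl⟩ | rfl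
      · rw [Fin.snoc_castSucc, Fin.snoc_castSucc] at hab
        exact congrArg Fin.castSucc (hp hab)
      · rw [Fin.snoc_castSucc, Fin.snoc_last] at hab
        exact absurd ⟨a', hab⟩ hxr
      · rw [Fin.snoc_last, Fin.snoc_castSucc] at hab
        exact absurd ⟨b', hab.symm⟩ hxr
      · rfl
    · intro i j k hij hik hjk hcol
      obtain ⟨ℓ, hL, hsub⟩ := hcol
      have h1 : (Fin.snoc p x : Fin (n+1) → Pl.Point) i ∈ ℓ := hsub (Set.mem_insert _ _)
      have h2 : (Fin.snoc p x : Fin (n+1) → Pl.Point) j ∈ ℓ :=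
        hsub (Set.mem_insert_of_mem _ (Set.mem_insert _ _))
      have h3 : (Fin.snoc p x : Fin (n+1) → Pl.Point) k ∈ ℓ :=
        hsub (Set.mem_insert_of_mem _ (Set.mem_insert_of_mem _ rfl))
      have key : ∀ a b : Fin n, a ≠ b → p a ∈ ℓ → p b ∈ ℓ → x ∈ ℓ → False := by
        intro a b hab ha hb hx'
        have hll : ℓ = Pl.lineThrough (p a) (p b) := lineThrough_unique (hp.ne hab) hL ha hb
        have hc : ({a, b} : Finset (Fin n)).card = 2 := Finset.card_pair hab
        refine hgood _ hc ?_
        rw [pairLine_eq hp harc hab, ← hll]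
        exact hx'
      have keyarc : ∀ a b c : Fin n, a ≠ b → a ≠ c → b ≠ c →
          p a ∈ ℓ → p b ∈ ℓ → p c ∈ ℓ → False := by
        intro a b c hab hac hbc ha hb hc
        refine harc a b c hab hac hbc ⟨ℓ, hL, ?_⟩
        intro y hy
        simp only [Set.mem_insert_iff, Set.mem_singleton_iff] at hy
        rcases hy with rfl | rfl | rfl
        · exact ha
        · exact hb
        · exact hc
      rcases Fin.eq_castSucc_or_eq_last i with ⟨i', rfl⟩ | rfl <;>
        rcases Fin.eq_castSucc_or_eq_last j with ⟨j', rfl⟩ | rfl <;>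
          rcases Fin.eq_castSucc_or_eq_last k with ⟨k', rfl⟩ | rfl <;>
            simp only [Fin.snoc_castSucc, Fin.snoc_last] at h1 h2 h3
      · exact keyarc i' j' k' (fun h => hij (congrArg Fin.castSucc h))
          (fun h => hik (congrArg Fin.castSucc h))
          (fun h => hjk (congrArg Fin.castSucc h)) h1 h2 h3
      · exact key i' j' (fun h => hij (congrArg Fin.castSucc h)) h1 h2 h3
      · exact key i' k' (fun h => hik (congrArg Fin.castSucc h)) h1 h3 h2
      · exact absurd rfl hjk
      · exact key j' k' (fun h => hjk (congrArg Fin.castSucc h)) h2 h3 h1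
      · exact absurd rfl hik
      · exact absurd rfl hij
      · exact absurd rfl hij

end

end Arc

lemma nArcs_succ {Pl : ProjPlane q} {n : ℕ} (hn2 : 2 ≤ n) (hn5 : n ≤ 5) :
    2 * (Pl.nArcs (n+1) : ℤ) = (Pl.nArcs n : ℤ) *
      (2 * ((q:ℤ)^2 + q + 1) - 2*(n:ℤ) - 2*((n.choose 2 : ℕ):ℤ)*((q:ℤ)+1)
        + ((n.choose 2 : ℕ):ℤ)*(((n.choose 2:ℕ):ℤ) - 1)
        + (n:ℤ)*(2*((n:ℤ)-1) - ((n:ℤ)-1)*((n:ℤ)-2))) := by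
  classical
  set cond : ∀ m : ℕ, (Fin m → Pl.Point) → Prop := fun m f =>
    Function.Injective f ∧ ∀ i j k : Fin m, i ≠ j → i ≠ k → j ≠ k →
      ¬ Pl.Collinear {f i, f j, f k} with hcond
  set TT : Finset (Fin (n+1) → Pl.Point) := Finset.univ.filter (cond (n+1)) with hTT
  set SS : Finset (Fin n → Pl.Point) := Finset.univ.filter (cond n) with hSS
  set good : (Fin n → Pl.Point) → Finset Pl.Point := fun g =>
    Finset.univ.filter (fun x : Pl.Point =>
      ∀ e : Finset (Fin n), e.card = 2 → x ∉ Pl.pairLine g e) with hgood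
  have hmemSS : ∀ g, g ∈ SS ↔ cond n g := by
    intro g; rw [hSS, Finset.mem_filter]; simp
  have hmemTT : ∀ f, f ∈ TT ↔ cond (n+1) f := by
    intro f; rw [hTT, Finset.mem_filter]; simp
  -- fiberwise count
  have hstep : ∀ f ∈ TT, Fin.init f ∈ SS := by
    intro f hf
    rw [hmemTT] at hf
    rw [hmemSS]
    refine ⟨fun a b hab => Fin.castSucc_injective n (hf.1 hab), ?_⟩
    intro i j k hij hik hjk
    exact hf.2 i.castSucc j.castSucc k.castSucc
      (fun h => hij (Fin.castSucc_injective n h))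
      (fun h => hik (Fin.castSucc_injective n h))
      (fun h => hjk (Fin.castSucc_injective n h))
  have hcardTT : TT.card = ∑ g ∈ SS, (TT.filter (fun f => Fin.init f = g)).card :=
    Finset.card_eq_sum_card_fiberwise hstep
  have hfiber : ∀ g ∈ SS, (TT.filter (fun f => Fin.init f = g)).card = (good g).card := by
    intro g hg
    rw [hmemSS] at hg
    obtain ⟨hgi, hga⟩ := hg
    refine Finset.card_bij' (fun f _ => f (Fin.last n)) (fun x _ => Fin.snoc g x) ?_ ?_ ?_ ?_
    · -- maps into good g
      intro f hf
      rw [Finset.mem_filter] at hf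
      obtain ⟨hfT, hfi⟩ := hf
      rw [hmemTT] at hfT
      have hsnoc : (Fin.snoc g (f (Fin.last n)) : Fin (n+1) → Pl.Point) = f := by
        rw [← hfi]; exact Fin.snoc_init_self f
      rw [hgood]
      simp only [Finset.mem_filter, Finset.mem_univ, true_and]
      refine (snoc_arc_iff hgi hga hn2 (f (Fin.last n))).1 ?_
      rw [hsnoc]
      exact hfT
    · -- reverse maps into fiber
      intro x hx
      rw [hgood] at hx
      simp only [Finset.mem_filter, Finset.mem_univ, true_and] at hx
      simp only [Finset.mem_filter]
      constructor
      · rw [hmemTT]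
        exact (snoc_arc_iff hgi hga hn2 x).2 hx
      · show Fin.init (Fin.snoc g x : Fin (n+1) → Pl.Point) = g
        simp
    · intro f hf
      rw [Finset.mem_filter] at hf
      show Fin.snoc g (f (Fin.last n)) = f
      rw [← hf.2]
      exact Fin.snoc_init_self f
    · intro x hx
      show (Fin.snoc g x : Fin (n+1) → Pl.Point) (Fin.last n) = x
      simp
  have hgoodcard : ∀ g ∈ SS, 2 * ((good g).card : ℤ)
      = 2 * ((q:ℤ)^2 + q + 1) - 2*(n:ℤ) - 2*((n.choose 2 : ℕ):ℤ)*((q:ℤ)+1)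
        + ((n.choose 2 : ℕ):ℤ)*(((n.choose 2:ℕ):ℤ) - 1)
        + (n:ℤ)*(2*((n:ℤ)-1) - ((n:ℤ)-1)*((n:ℤ)-2)) := by
    intro g hg
    rw [hmemSS] at hg
    rw [hgood]
    exact good_count hg.1 hg.2 hn2 hn5
  have hnA1 : Pl.nArcs (n+1) = TT.card := by
    rw [ProjPlane.nArcs, Nat.card_eq_fintype_card, Fintype.card_subtype, hTT]
  have hnA2 : Pl.nArcs n = SS.card := by
    rw [ProjPlane.nArcs, Nat.card_eq_fintype_card, Fintype.card_subtype, hSS]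
  rw [hnA1, hnA2, hcardTT, Finset.sum_congr rfl hfiber, Nat.cast_sum, Finset.mul_sum,
    Finset.sum_congr rfl hgoodcard, Finset.sum_const, nsmul_eq_mul]


lemma fin_two_triples {m : ℕ} (hm : m ≤ 2) (i j k : Fin m) (hij : i ≠ j) (hik : i ≠ k)
    (hjk : j ≠ k) : False := by
  have h1 : i.val ≠ j.val := fun h => hij (Fin.ext h)
  have h2 : i.val ≠ k.val := fun h => hik (Fin.ext h)
  have h3 : j.val ≠ k.val := fun h => hjk (Fin.ext h)
  have := i.isLt; have := j.isLt; have := k.isLt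
  omega

variable {Pl : ProjPlane q}

lemma nArcs_one : Pl.nArcs 1 = q ^ 2 + q + 1 := by
  have e : {p : Fin 1 → Pl.Point // Function.Injective p ∧
      ∀ i j k : Fin 1, i ≠ j → i ≠ k → j ≠ k → ¬ Pl.Collinear {p i, p j, p k}} ≃ Pl.Point :=
    { toFun := fun f => f.1 0
      invFun := fun x => ⟨fun _ => x,
        fun a b _ => Subsingleton.elim a b,
        fun i j k hij _ _ => absurd (Subsingleton.elim i j) hij⟩
      left_inv := fun f => Subtype.ext (funext fun i => by rw [Subsingleton.elim i 0])
      right_inv := fun x => rfl }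
  rw [ProjPlane.nArcs, Nat.card_congr e, card_point]

lemma nArcs_two : Pl.nArcs 2 = (q ^ 2 + q + 1) * (q ^ 2 + q) := by
  have e : {p : Fin 2 → Pl.Point // Function.Injective p ∧
      ∀ i j k : Fin 2, i ≠ j → i ≠ k → j ≠ k → ¬ Pl.Collinear {p i, p j, p k}}
      ≃ (Fin 2 ↪ Pl.Point) :=
    (Equiv.subtypeEquivRight (fun f =>
      ⟨fun h => h.1, fun h => ⟨h, fun i j k hij hik hjk =>
        (fin_two_triples le_rfl i j k hij hik hjk).elim⟩⟩)).trans
      (Equiv.subtypeInjectiveEquivEmbedding _ _)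
  have hN : Fintype.card Pl.Point = q ^ 2 + q + 1 := by
    rw [← Nat.card_eq_fintype_card, card_point]
  rw [ProjPlane.nArcs, Nat.card_congr e, Nat.card_eq_fintype_card, Fintype.card_embedding_eq,
    Fintype.card_fin, hN]
  simp [Nat.descFactorial]
  ring

theorem count_six_arcs' :
    (Pl.nArcs 6 : ℤ) =
      ((q : ℤ) ^ 2 + q + 1) * ((q : ℤ) ^ 2 + q) * (q : ℤ) ^ 2 * ((q : ℤ) - 1) ^ 2 *
        ((q : ℤ) ^ 2 - 5 * q + 6) * ((q : ℤ) ^ 2 - 9 * q + 21) := by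
  have c2 : (Pl.nArcs 2 : ℤ) = ((q:ℤ)^2 + q + 1) * ((q:ℤ)^2 + q) := by
    rw [nArcs_two]; push_cast; ring
  have h3 := nArcs_succ (Pl := Pl) (n := 2) (by norm_num) (by norm_num)
  have h4 := nArcs_succ (Pl := Pl) (n := 3) (by norm_num) (by norm_num)
  have h5 := nArcs_succ (Pl := Pl) (n := 4) (by norm_num) (by norm_num)
  have h6 := nArcs_succ (Pl := Pl) (n := 5) (by norm_num) (by norm_num)
  rw [show ((2:ℕ).choose 2) = 1 from rfl] at h3
  rw [show ((3:ℕ).choose 2) = 3 from rfl] at h4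
  rw [show ((4:ℕ).choose 2) = 6 from rfl] at h5
  rw [show ((5:ℕ).choose 2) = 10 from rfl] at h6
  norm_num at h3 h4 h5 h6
  have c3 : (Pl.nArcs 3 : ℤ) = (Pl.nArcs 2 : ℤ) * (q:ℤ)^2 :=
    mul_left_cancel₀ two_ne_zero (by linear_combination h3)
  have c4 : (Pl.nArcs 4 : ℤ) = (Pl.nArcs 3 : ℤ) * ((q:ℤ) - 1)^2 :=
    mul_left_cancel₀ two_ne_zero (by linear_combination h4)
  have c5 : (Pl.nArcs 5 : ℤ) = (Pl.nArcs 4 : ℤ) * ((q:ℤ)^2 - 5*q + 6) :=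
    mul_left_cancel₀ two_ne_zero (by linear_combination h5)
  have c6 : (Pl.nArcs 6 : ℤ) = (Pl.nArcs 5 : ℤ) * ((q:ℤ)^2 - 9*q + 21) :=
    mul_left_cancel₀ two_ne_zero (by linear_combination h6)
  rw [c6, c5, c4, c3, c2]

end ProjPlane

/-- For every finite projective plane of order `q`, the number of ordered
6-arcs is `(q² + q + 1)(q² + q)q²(q-1)²(q² - 5q + 6)(q² - 9q + 21)`. -/
theorem count_six_arcs (q : ℕ) (Pl : ProjPlane q) :
    (Pl.nArcs 6 : ℤ) =
      ((q : ℤ) ^ 2 + q + 1) * ((q : ℤ) ^ 2 + q) * (q : ℤ) ^ 2 * ((q : ℤ) - 1) ^ 2 *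
        ((q : ℤ) ^ 2 - 5 * q + 6) * ((q : ℤ) ^ 2 - 9 * q + 21) :=
  ProjPlane.count_six_arcs'
end

section
/- For every positive integer n there exist a polynomial p(x) with integer coefficients and, for each superfiguration f on at most n points, a polynomial p_f(x) with integer coefficients, such that for every finite projective plane Π of order q, C_n(Π) = p(q) + Σ_f p_f(q)·A_f(Π), where the sum is over all superfigurations f on at most n points. -/
open scoped Classical

/-- A boolean `m`-function (a function from subsets of the `m`-point set to
`{0,1}`) is a linear space function if collinear sets are downward closed,
all sets of at most 2 points are collinear, and two collinear sets meeting in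
at least 2 points have collinear union. -/
def IsLSF {m : ℕ} (f : Finset (Fin m) → Bool) : Prop :=
  (∀ I J : Finset (Fin m), J ⊆ I → f I = true → f J = true) ∧
  (∀ I : Finset (Fin m), I.card ≤ 2 → f I = true) ∧
  (∀ I J : Finset (Fin m), f I = true → f J = true → 2 ≤ (I ∩ J).card →
    f (I ∪ J) = true)

/-- A full line of `f`: a set of at least 3 points mapped to 1 by `f`, maximal
with respect to inclusion among sets mapped to 1. -/
def IsFullLine {m : ℕ} (f : Finset (Fin m) → Bool) (S : Finset (Fin m)) : Prop :=
  3 ≤ S.card ∧ f S = true ∧ ∀ T : Finset (Fin m), S ⊆ T → f T = true → T = S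

/-- The index of a point: the number of full lines containing it. -/
noncomputable def pointIndex {m : ℕ} (f : Finset (Fin m) → Bool) (p : Fin m) : ℕ :=
  Nat.card {S : Finset (Fin m) // IsFullLine f S ∧ p ∈ S}

/-- A superfiguration: a linear space function in which every point has index
at least 3 (every full line automatically has at least 3 points). -/
def IsSuperfiguration {m : ℕ} (f : Finset (Fin m) → Bool) : Prop :=
  IsLSF f ∧ ∀ p : Fin m, 3 ≤ pointIndex f p

/-- `A_f(Π)`: the number of strong realizations of the boolean `m`-function
`f` in the plane: tuples of distinct points such that `f⁻¹(1)` is exactly the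
collection of subsets lying on a common line. -/
noncomputable def strongCount {q m : ℕ} (Pl : ProjPlane q)
    (f : Finset (Fin m) → Bool) : ℕ :=
  Nat.card {p : Fin m → Pl.Point // Function.Injective p ∧
    ∀ S : Finset (Fin m), (f S = true ↔ ∃ ℓ ∈ Pl.L, ∀ i ∈ S, p i ∈ ℓ)}

/-- `B_f(Π) = Σ_{g ≥ f} A_g(Π)`, the sum over all boolean `m`-functions
`g ≥ f`; the number of weak realizations of `f` when `f` is a linear space
function. -/
noncomputable def weakCount {q m : ℕ} (Pl : ProjPlane q)
    (f : Finset (Fin m) → Bool) : ℕ :=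
  ∑ g ∈ Finset.univ.filter
      (fun g : Finset (Fin m) → Bool => ∀ S, f S = true → g S = true),
    strongCount Pl g
namespace Glynn

variable {q : ℕ}

noncomputable instance (Pl : ProjPlane q) : Fintype Pl.Point := Pl.fintypePoint

lemma line_eq (Pl : ProjPlane q) {ℓ₁ ℓ₂ : Set Pl.Point} (h1 : ℓ₁ ∈ Pl.L) (h2 : ℓ₂ ∈ Pl.L)
    {a b : Pl.Point} (hab : a ≠ b) (ha1 : a ∈ ℓ₁) (hb1 : b ∈ ℓ₁) (ha2 : a ∈ ℓ₂) (hb2 : b ∈ ℓ₂) :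
    ℓ₁ = ℓ₂ := by
  obtain ⟨ℓ, -, hu⟩ := Pl.unique_line a b hab
  rw [hu ℓ₁ ⟨h1, ha1, hb1⟩, hu ℓ₂ ⟨h2, ha2, hb2⟩]

lemma exists_line_through (Pl : ProjPlane q) (p : Pl.Point) : ∃ ℓ ∈ Pl.L, p ∈ ℓ := by
  have h := Pl.point_card p
  have hfin : {ℓ ∈ Pl.L | p ∈ ℓ}.Finite := Set.toFinite _
  have : 0 < {ℓ ∈ Pl.L | p ∈ ℓ}.ncard := by omega
  obtain ⟨ℓ, hℓ⟩ := (Set.ncard_pos hfin).mp this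
  exact ⟨ℓ, hℓ.1, hℓ.2⟩

lemma L_nonempty (Pl : ProjPlane q) : ∃ ℓ, ℓ ∈ Pl.L := by
  obtain ⟨a, -⟩ := Pl.nondegenerate
  obtain ⟨ℓ, hℓ, -⟩ := exists_line_through Pl a
  exact ⟨ℓ, hℓ⟩

lemma card_point (Pl : ProjPlane q) : Fintype.card Pl.Point = q ^ 2 + q + 1 := by
  obtain ⟨P, -⟩ := Pl.nondegenerate
  classical
  set Pen : Finset (Set Pl.Point) := {ℓ ∈ Pl.L | P ∈ ℓ}.toFinset with hPen
  have hPenCard : Pen.card = q + 1 := by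
    rw [hPen, ← Set.ncard_eq_toFinset_card']
    exact Pl.point_card P
  have hmem : ∀ ℓ ∈ Pen, ℓ ∈ Pl.L ∧ P ∈ ℓ := by
    intro ℓ hℓ
    rw [hPen, Set.mem_toFinset] at hℓ
    exact hℓ
  have hLC : ∀ ℓ ∈ Pen, (ℓ.toFinset.erase P).card = q := by
    intro ℓ hℓ
    have h1 : ℓ.toFinset.card = q + 1 := by
      rw [← Set.ncard_eq_toFinset_card']
      exact Pl.line_card ℓ (hmem ℓ hℓ).1
    rw [Finset.card_erase_of_mem (Set.mem_toFinset.mpr (hmem ℓ hℓ).2), h1]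
    omega
  have hdisj : ∀ ℓ₁ ∈ Pen, ∀ ℓ₂ ∈ Pen, ℓ₁ ≠ ℓ₂ →
      Disjoint (ℓ₁.toFinset.erase P) (ℓ₂.toFinset.erase P) := by
    intro ℓ₁ h1 ℓ₂ h2 hne
    rw [Finset.disjoint_left]
    intro a ha1 ha2
    have ha1' := Finset.mem_erase.mp ha1
    have ha2' := Finset.mem_erase.mp ha2
    exact hne (line_eq Pl (hmem _ h1).1 (hmem _ h2).1 (Ne.symm ha1'.1)
      (hmem _ h1).2 (Set.mem_toFinset.mp ha1'.2) (hmem _ h2).2 (Set.mem_toFinset.mp ha2'.2))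
  have huniv : (Finset.univ : Finset Pl.Point) =
      insert P (Pen.biUnion fun ℓ => ℓ.toFinset.erase P) := by
    ext Q
    simp only [Finset.mem_univ, true_iff, Finset.mem_insert, Finset.mem_biUnion]
    by_cases hQ : Q = P
    · exact Or.inl hQ
    · right
      obtain ⟨ℓ, hℓ, hQℓ⟩ := exists_line_through Pl Q
      obtain ⟨ℓ', hℓ', hPℓ'⟩ := exists_line_through Pl P
      obtain ⟨ℓ₀, h₀, -⟩ := Pl.unique_line Q P hQ
      refine ⟨ℓ₀, ?_, ?_⟩
      · rw [hPen, Set.mem_toFinset]; exact ⟨h₀.1, h₀.2.2⟩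
      · exact Finset.mem_erase.mpr ⟨hQ, Set.mem_toFinset.mpr h₀.2.1⟩
  have hPnot : P ∉ Pen.biUnion fun ℓ => ℓ.toFinset.erase P := by
    simp only [Finset.mem_biUnion, not_exists]
    intro ℓ h
    exact (Finset.mem_erase.mp h.2).1 rfl
  have hcard := Finset.card_insert_of_notMem hPnot
  rw [← huniv] at hcard
  rw [← Finset.card_univ, hcard, Finset.card_biUnion hdisj, Finset.sum_congr rfl hLC,
    Finset.sum_const, hPenCard, smul_eq_mul]
  ring

end Glynn
namespace Glynn2

open Glynn

variable {m : ℕ} {f : Finset (Fin m) → Bool}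

lemma exists_fullLine (hf : IsLSF f) {S : Finset (Fin m)} (hS : f S = true) (h3 : 3 ≤ S.card) :
    ∃ T, IsFullLine f T ∧ S ⊆ T := by
  classical
  set 𝒯 : Finset (Finset (Fin m)) := Finset.univ.filter (fun T => S ⊆ T ∧ f T = true) with h𝒯
  have hmemS : S ∈ 𝒯 := by simp [h𝒯, hS]
  obtain ⟨T, hT, hmax⟩ := Finset.exists_max_image 𝒯 Finset.card ⟨S, hmemS⟩
  simp only [h𝒯, Finset.mem_filter, Finset.mem_univ, true_and] at hT
  refine ⟨T, ⟨le_trans h3 (Finset.card_le_card hT.1), hT.2, ?_⟩, hT.1⟩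
  intro T' hTT' hfT'
  have hT'mem : T' ∈ 𝒯 := by
    simp only [h𝒯, Finset.mem_filter, Finset.mem_univ, true_and]
    exact ⟨hT.1.trans hTT', hfT'⟩
  exact (Finset.eq_of_subset_of_card_le hTT' (hmax T' hT'mem)).symm

lemma fullLine_unique (hf : IsLSF f) {T₁ T₂ : Finset (Fin m)} (h₁ : IsFullLine f T₁)
    (h₂ : IsFullLine f T₂) (h : 2 ≤ (T₁ ∩ T₂).card) : T₁ = T₂ := by
  have hu := hf.2.2 T₁ T₂ h₁.2.1 h₂.2.1 h
  have e1 := h₁.2.2 (T₁ ∪ T₂) Finset.subset_union_left hu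
  have e2 := h₂.2.2 (T₁ ∪ T₂) Finset.subset_union_right hu
  exact e1.symm.trans e2

lemma fullLine_unique' (hf : IsLSF f) {T₁ T₂ : Finset (Fin m)} (h₁ : IsFullLine f T₁)
    (h₂ : IsFullLine f T₂) {a b : Fin m} (hab : a ≠ b) (ha1 : a ∈ T₁) (hb1 : b ∈ T₁)
    (ha2 : a ∈ T₂) (hb2 : b ∈ T₂) : T₁ = T₂ := by
  refine fullLine_unique hf h₁ h₂ ?_
  have : ({a, b} : Finset (Fin m)) ⊆ T₁ ∩ T₂ := by
    intro i hi
    simp only [Finset.mem_insert, Finset.mem_singleton] at hi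
    rcases hi with rfl | rfl <;> simp [Finset.mem_inter, *]
  calc 2 = ({a, b} : Finset (Fin m)).card := by rw [Finset.card_insert_of_notMem (by simp [hab]), Finset.card_singleton]
  _ ≤ _ := Finset.card_le_card this

lemma pointIndex_eq (f : Finset (Fin m) → Bool) (x : Fin m) :
    pointIndex f x = (Finset.univ.filter (fun S => IsFullLine f S ∧ x ∈ S)).card := by
  classical
  rw [pointIndex, Nat.card_eq_fintype_card, Fintype.card_subtype]

variable {q : ℕ}

/-- A strong realization. -/
def Strong (Pl : ProjPlane q) {m : ℕ} (f : Finset (Fin m) → Bool) (p : Fin m → Pl.Point) : Prop :=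
  Function.Injective p ∧ ∀ S, (f S = true ↔ ∃ ℓ ∈ Pl.L, ∀ i ∈ S, p i ∈ ℓ)

lemma strongCount_def (Pl : ProjPlane q) (f : Finset (Fin m) → Bool) :
    strongCount Pl f = Nat.card {p : Fin m → Pl.Point // Strong Pl f p} := rfl

/-- The boolean function realized by a tuple of points. -/
noncomputable def realized (Pl : ProjPlane q) {m : ℕ} (p : Fin m → Pl.Point) :
    Finset (Fin m) → Bool := fun S => decide (∃ ℓ ∈ Pl.L, ∀ i ∈ S, p i ∈ ℓ)

lemma realized_eq_iff (Pl : ProjPlane q) {p : Fin m → Pl.Point} {f : Finset (Fin m) → Bool} :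
    realized Pl p = f ↔ ∀ S, (f S = true ↔ ∃ ℓ ∈ Pl.L, ∀ i ∈ S, p i ∈ ℓ) := by
  constructor
  · intro h S
    rw [← h, realized, decide_eq_true_eq]
  · intro h
    funext S
    have := h S
    rw [realized]
    by_cases hfS : f S = true
    · simp [hfS, this.mp hfS]
    · simp only [Bool.not_eq_true] at hfS
      rw [hfS, decide_eq_false_iff_not]
      rw [← this]
      simp [hfS]

lemma strong_iff_realized (Pl : ProjPlane q) {p : Fin m → Pl.Point} {f : Finset (Fin m) → Bool} :
    Strong Pl f p ↔ Function.Injective p ∧ realized Pl p = f := by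
  rw [Strong, realized_eq_iff]

lemma realized_small (Pl : ProjPlane q) {p : Fin m → Pl.Point} (hp : Function.Injective p)
    {S : Finset (Fin m)} (hS : S.card ≤ 2) : ∃ ℓ ∈ Pl.L, ∀ i ∈ S, p i ∈ ℓ := by
  have : S.card = 0 ∨ S.card = 1 ∨ S.card = 2 := by omega
  rcases this with h | h | h
  · obtain ⟨ℓ, hℓ⟩ := L_nonempty Pl
    rw [Finset.card_eq_zero] at h
    exact ⟨ℓ, hℓ, by simp [h]⟩
  · obtain ⟨i, rfl⟩ := Finset.card_eq_one.mp h
    obtain ⟨ℓ, hℓ, hi⟩ := exists_line_through Pl (p i)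
    exact ⟨ℓ, hℓ, by simpa using hi⟩
  · obtain ⟨i, j, hij, rfl⟩ := Finset.card_eq_two.mp h
    obtain ⟨ℓ, ⟨hℓ, hi, hj⟩, -⟩ := Pl.unique_line (p i) (p j) (fun hpe => hij (hp hpe))
    refine ⟨ℓ, hℓ, ?_⟩
    intro a ha
    simp only [Finset.mem_insert, Finset.mem_singleton] at ha
    rcases ha with rfl | rfl <;> assumption

lemma realized_isLSF (Pl : ProjPlane q) {p : Fin m → Pl.Point} (hp : Function.Injective p) :
    IsLSF (realized Pl p) := by
  refine ⟨?_, ?_, ?_⟩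
  · intro I J hJI hI
    rw [realized, decide_eq_true_eq] at hI ⊢
    obtain ⟨ℓ, hℓ, h⟩ := hI
    exact ⟨ℓ, hℓ, fun i hi => h i (hJI hi)⟩
  · intro I hI
    rw [realized, decide_eq_true_eq]
    exact realized_small Pl hp hI
  · intro I J hI hJ hcard
    rw [realized, decide_eq_true_eq] at hI hJ ⊢
    obtain ⟨ℓ₁, hℓ₁, h₁⟩ := hI
    obtain ⟨ℓ₂, hℓ₂, h₂⟩ := hJ
    obtain ⟨a, ha, b, hb, hab⟩ := Finset.one_lt_card.mp hcard
    rw [Finset.mem_inter] at ha hb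
    have hline : ℓ₁ = ℓ₂ := line_eq Pl hℓ₁ hℓ₂ (fun hpe => hab (hp hpe))
      (h₁ a ha.1) (h₁ b hb.1) (h₂ a ha.2) (h₂ b hb.2)
    refine ⟨ℓ₁, hℓ₁, ?_⟩
    intro i hi
    rcases Finset.mem_union.mp hi with h | h
    · exact h₁ i h
    · rw [hline]; exact h₂ i h

lemma strong_isLSF (Pl : ProjPlane q) {p : Fin m → Pl.Point} {f : Finset (Fin m) → Bool}
    (h : Strong Pl f p) : IsLSF f := by
  rw [strong_iff_realized] at h
  rw [← h.2]
  exact realized_isLSF Pl h.1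

lemma strongCount_eq_zero_of_not_LSF (Pl : ProjPlane q) {f : Finset (Fin m) → Bool}
    (h : ¬ IsLSF f) : strongCount Pl f = 0 := by
  rw [strongCount_def]
  have : IsEmpty {p : Fin m → Pl.Point // Strong Pl f p} :=
    ⟨fun p => h (strong_isLSF Pl p.2)⟩
  exact Nat.card_of_isEmpty

end Glynn2
namespace Glynn3

open Glynn Glynn2

variable {q k : ℕ}

lemma bool_eq_of_iff {a b : Bool} (h : (a = true) ↔ (b = true)) : a = b := by
  cases a <;> cases b <;> simp_all

/-- Restriction of `f` to the points other than `x`. -/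
def drop (f : Finset (Fin (k+1)) → Bool) (x : Fin (k+1)) : Finset (Fin k) → Bool :=
  fun S => f (S.map (Fin.succAboveEmb x))

/-- The full lines of `f` through `x`. -/
noncomputable def FLx (f : Finset (Fin (k+1)) → Bool) (x : Fin (k+1)) :
    Finset (Finset (Fin (k+1))) :=
  Finset.univ.filter (fun S => IsFullLine f S ∧ x ∈ S)

lemma FLx_card (f : Finset (Fin (k+1)) → Bool) (x : Fin (k+1)) :
    (FLx f x).card = pointIndex f x := (pointIndex_eq f x).symm

/-- The boolean functions dominating `f` that agree with `f` away from `x`. -/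
noncomputable def Gset (f : Finset (Fin (k+1)) → Bool) (x : Fin (k+1)) :
    Finset ((Finset (Fin (k+1))) → Bool) :=
  Finset.univ.filter
    (fun g => (∀ S, x ∉ S → g S = f S) ∧ (∀ S, f S = true → g S = true))

/-- The intermediate predicate: tuples whose restriction strongly realizes
`drop f x` and that satisfy the collinearity constraints of the full lines
through `x`. -/
def Wpred (Pl : ProjPlane q) (f : Finset (Fin (k+1)) → Bool) (x : Fin (k+1))
    (p : Fin (k+1) → Pl.Point) : Prop :=
  Function.Injective p ∧
    (∀ S : Finset (Fin k), (drop f x S = true ↔ ∃ ℓ ∈ Pl.L, ∀ i ∈ S, p (x.succAbove i) ∈ ℓ)) ∧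
    ∀ T ∈ FLx f x, ∃ ℓ ∈ Pl.L, ∀ i ∈ T, p i ∈ ℓ

lemma map_mem_cond (Pl : ProjPlane q) (x : Fin (k+1)) (p : Fin (k+1) → Pl.Point)
    (S : Finset (Fin k)) (ℓ : Set Pl.Point) :
    (∀ i ∈ S.map (Fin.succAboveEmb x), p i ∈ ℓ) ↔ ∀ j ∈ S, p (x.succAbove j) ∈ ℓ := by
  constructor
  · intro h j hj
    exact h _ (Finset.mem_map_of_mem _ hj)
  · intro h i hi
    obtain ⟨j, hj, rfl⟩ := Finset.mem_map.mp hi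
    exact h j hj

lemma notMem_map (x : Fin (k+1)) (S : Finset (Fin k)) :
    x ∉ S.map (Fin.succAboveEmb x) := by
  intro h
  obtain ⟨j, -, hj⟩ := Finset.mem_map.mp h
  exact Fin.succAbove_ne x j hj

lemma exists_pull {S : Finset (Fin (k+1))} {x : Fin (k+1)} (hx : x ∉ S) :
    ∃ S' : Finset (Fin k), S'.map (Fin.succAboveEmb x) = S := by
  classical
  refine ⟨Finset.univ.filter (fun i => x.succAbove i ∈ S), ?_⟩
  ext j
  simp only [Finset.mem_map, Finset.mem_filter, Finset.mem_univ, true_and,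
    Fin.succAboveEmb_apply]
  constructor
  · rintro ⟨i, hi, rfl⟩; exact hi
  · intro hj
    have hjx : j ≠ x := fun h => hx (h ▸ hj)
    obtain ⟨i, hi⟩ := Fin.exists_succAbove_eq hjx
    exact ⟨i, hi.symm ▸ hj, hi⟩

lemma W_realized_mem (Pl : ProjPlane q) {f : Finset (Fin (k+1)) → Bool} {x : Fin (k+1)}
    (hf : IsLSF f) {p : Fin (k+1) → Pl.Point} (hp : Wpred Pl f x p) :
    realized Pl p ∈ Gset f x := by
  classical
  obtain ⟨hinj, hres, hlines⟩ := hp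
  have key : ∀ S : Finset (Fin (k+1)), x ∉ S → realized Pl p S = f S := by
    intro S hxS
    obtain ⟨S', rfl⟩ := exists_pull hxS
    apply bool_eq_of_iff
    rw [realized, decide_eq_true_eq]
    have h1 := hres S'
    have h2 : drop f x S' = f (S'.map (Fin.succAboveEmb x)) := rfl
    rw [h2] at h1
    rw [h1]
    constructor
    · rintro ⟨ℓ, hℓ, h⟩
      exact ⟨ℓ, hℓ, (map_mem_cond Pl x p S' ℓ).mp h⟩
    · rintro ⟨ℓ, hℓ, h⟩
      exact ⟨ℓ, hℓ, (map_mem_cond Pl x p S' ℓ).mpr h⟩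
  have key2 : ∀ S : Finset (Fin (k+1)), f S = true → realized Pl p S = true := by
    intro S hS
    by_cases h2 : S.card ≤ 2
    · exact (realized_isLSF Pl hinj).2.1 S h2
    · push_neg at h2
      obtain ⟨T, hT, hST⟩ := exists_fullLine hf hS h2
      by_cases hxT : x ∈ T
      · have hTmem : T ∈ FLx f x := by
          rw [FLx, Finset.mem_filter]
          exact ⟨Finset.mem_univ _, hT, hxT⟩
        obtain ⟨ℓ, hℓ, h⟩ := hlines T hTmem
        rw [realized, decide_eq_true_eq]
        exact ⟨ℓ, hℓ, fun i hi => h i (hST hi)⟩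
      · have hxS : x ∉ S := fun h => hxT (hST h)
        rw [key S hxS]
        exact hS
  rw [Gset, Finset.mem_filter]
  exact ⟨Finset.mem_univ _, key, key2⟩

lemma strong_mem_W (Pl : ProjPlane q) {f g : Finset (Fin (k+1)) → Bool} {x : Fin (k+1)}
    (hg : g ∈ Gset f x) {p : Fin (k+1) → Pl.Point} (hs : Strong Pl g p) :
    Wpred Pl f x p := by
  rw [Gset, Finset.mem_filter] at hg
  obtain ⟨-, hg1, hg2⟩ := hg
  refine ⟨hs.1, ?_, ?_⟩
  · intro S
    have hx : x ∉ S.map (Fin.succAboveEmb x) := notMem_map x S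
    have h1 : drop f x S = g (S.map (Fin.succAboveEmb x)) := (hg1 _ hx).symm
    rw [h1, hs.2]
    constructor
    · rintro ⟨ℓ, hℓ, h⟩
      exact ⟨ℓ, hℓ, (map_mem_cond Pl x p S ℓ).mp h⟩
    · rintro ⟨ℓ, hℓ, h⟩
      exact ⟨ℓ, hℓ, (map_mem_cond Pl x p S ℓ).mpr h⟩
  · intro T hT
    rw [FLx, Finset.mem_filter] at hT
    exact (hs.2 T).mp (hg2 T hT.2.1.2.1)

lemma cardW_eq_sum (Pl : ProjPlane q) {f : Finset (Fin (k+1)) → Bool} {x : Fin (k+1)}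
    (hf : IsLSF f) :
    Nat.card {p : Fin (k+1) → Pl.Point // Wpred Pl f x p} =
      ∑ g ∈ Gset f x, strongCount Pl g := by
  classical
  rw [Nat.card_eq_fintype_card]
  have hcard := Fintype.card_congr
    (Equiv.sigmaFiberEquiv (fun w : {p : Fin (k+1) → Pl.Point // Wpred Pl f x p} =>
      realized Pl w.1)).symm
  rw [hcard, Fintype.card_sigma]
  rw [← Finset.sum_subset (Finset.subset_univ (Gset f x)) (by
    intro g _ hg
    rw [Fintype.card_eq_zero_iff]
    constructor
    rintro ⟨w, hw⟩
    exact hg (hw ▸ W_realized_mem Pl hf w.2))]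
  apply Finset.sum_congr rfl
  intro g hg
  rw [strongCount_def, Nat.card_eq_fintype_card]
  apply Fintype.card_congr
  refine ⟨fun w => ⟨w.1.1, (strong_iff_realized Pl).mpr ⟨w.1.2.1, w.2⟩⟩,
    fun s => ⟨⟨s.1, strong_mem_W Pl hg s.2⟩, ((strong_iff_realized Pl).mp s.2).2⟩, ?_, ?_⟩
  · intro w; rfl
  · intro s; rfl

end Glynn3
namespace Glynn3

open Glynn Glynn2

variable {q k : ℕ}

/-- Candidate positions for the extra point. -/
def Cand (Pl : ProjPlane q) (f : Finset (Fin (k+1)) → Bool) (x : Fin (k+1))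
    (r : Fin k → Pl.Point) (y : Pl.Point) : Prop :=
  (∀ i, r i ≠ y) ∧ ∀ T ∈ FLx f x, ∃ ℓ ∈ Pl.L, y ∈ ℓ ∧ ∀ i, x.succAbove i ∈ T → r i ∈ ℓ

lemma fin_cases_succAbove (x j : Fin (k+1)) : j = x ∨ ∃ i, j = x.succAbove i := by
  by_cases h : j = x
  · exact Or.inl h
  · exact Or.inr ((Fin.exists_succAbove_eq h).imp (fun i hi => hi.symm))

noncomputable def fiber_equiv (Pl : ProjPlane q) (f : Finset (Fin (k+1)) → Bool)
    (x : Fin (k+1)) {r : Fin k → Pl.Point} (hr : Strong Pl (drop f x) r) :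
    {w : {p : Fin (k+1) → Pl.Point // Wpred Pl f x p} //
        (fun i => w.1 (x.succAbove i)) = r} ≃ {y : Pl.Point // Cand Pl f x r y} := by
  classical
  have main : ∀ y : Pl.Point, Cand Pl f x r y → Wpred Pl f x (x.insertNth y r) := by
    intro y hy
    refine ⟨?_, ?_, ?_⟩
    · -- injective
      intro j₁ j₂ h
      rcases fin_cases_succAbove x j₁ with h1 | ⟨i₁, h1⟩
      · rcases fin_cases_succAbove x j₂ with h2 | ⟨i₂, h2⟩
        · rw [h1, h2]
        · exfalso
          rw [h1, h2, Fin.insertNth_apply_same, Fin.insertNth_apply_succAbove] at h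
          exact (hy.1 i₂) h.symm
      · rcases fin_cases_succAbove x j₂ with h2 | ⟨i₂, h2⟩
        · exfalso
          rw [h1, h2, Fin.insertNth_apply_succAbove, Fin.insertNth_apply_same] at h
          exact (hy.1 i₁) h
        · rw [h1, h2, Fin.insertNth_apply_succAbove, Fin.insertNth_apply_succAbove] at h
          rw [h1, h2, hr.1 h]
    · -- strong restriction
      intro S
      simp only [Fin.insertNth_apply_succAbove]
      exact hr.2 S
    · -- lines through x
      intro T hT
      obtain ⟨ℓ, hℓ, hyl, hall⟩ := hy.2 T hT
      refine ⟨ℓ, hℓ, fun j hj => ?_⟩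
      rcases fin_cases_succAbove x j with h1 | ⟨i, h1⟩ <;> rw [h1] at hj ⊢
      · rw [Fin.insertNth_apply_same]; exact hyl
      · rw [Fin.insertNth_apply_succAbove]; exact hall i hj
  have prop : ∀ p : Fin (k+1) → Pl.Point, Wpred Pl f x p →
      (fun i => p (x.succAbove i)) = r → Cand Pl f x r (p x) := by
    rintro p ⟨hinj, hres, hlines⟩ hrest
    constructor
    · intro i he
      have h1 : r i = p (x.succAbove i) := (congrFun hrest i).symm
      rw [h1] at he
      exact Fin.succAbove_ne x i (hinj he)
    · intro T hT
      obtain ⟨ℓ, hℓ, hall⟩ := hlines T hT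
      have hxT : x ∈ T := by
        rw [FLx, Finset.mem_filter] at hT
        exact hT.2.2
      refine ⟨ℓ, hℓ, hall x hxT, fun i hi => ?_⟩
      have h1 : r i = p (x.succAbove i) := (congrFun hrest i).symm
      rw [h1]
      exact hall _ hi
  refine
    { toFun := fun w => ⟨w.1.1 x, prop w.1.1 w.1.2 w.2⟩
      invFun := fun y => ⟨⟨x.insertNth y.1 r, main y.1 y.2⟩, by
        funext i
        simp only [Fin.insertNth_apply_succAbove]⟩
      left_inv := ?_
      right_inv := ?_ }
  · -- left inverse
    rintro ⟨⟨p, hp⟩, hw⟩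
    apply Subtype.ext
    apply Subtype.ext
    funext j
    dsimp only
    rcases fin_cases_succAbove x j with h1 | ⟨i, h1⟩ <;> rw [h1]
    · rw [Fin.insertNth_apply_same]
    · rw [Fin.insertNth_apply_succAbove]
      exact (congrFun hw i).symm
  · -- right inverse
    rintro ⟨y, hy⟩
    apply Subtype.ext
    dsimp only
    rw [Fin.insertNth_apply_same]

lemma cardW_eq_c (Pl : ProjPlane q) {f : Finset (Fin (k+1)) → Bool} {x : Fin (k+1)} (c : ℕ)
    (hc : ∀ r : Fin k → Pl.Point, Strong Pl (drop f x) r →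
      Nat.card {y : Pl.Point // Cand Pl f x r y} = c) :
    Nat.card {p : Fin (k+1) → Pl.Point // Wpred Pl f x p} =
      c * strongCount Pl (drop f x) := by
  classical
  rw [Nat.card_eq_fintype_card]
  have hcard := Fintype.card_congr
    (Equiv.sigmaFiberEquiv (fun w : {p : Fin (k+1) → Pl.Point // Wpred Pl f x p} =>
      (fun i => w.1 (x.succAbove i)))).symm
  rw [hcard, Fintype.card_sigma]
  have hterm : ∀ r : Fin k → Pl.Point,
      Fintype.card {w : {p : Fin (k+1) → Pl.Point // Wpred Pl f x p} //
        (fun i => w.1 (x.succAbove i)) = r} =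
      if Strong Pl (drop f x) r then c else 0 := by
    intro r
    by_cases hs : Strong Pl (drop f x) r
    · rw [if_pos hs, ← hc r hs, Nat.card_eq_fintype_card]
      exact Fintype.card_congr (fiber_equiv Pl f x hs)
    · rw [if_neg hs, Fintype.card_eq_zero_iff]
      constructor
      rintro ⟨⟨p, hinj, hres, hlines⟩, hw⟩
      apply hs
      constructor
      · intro a b hab
        have h2 : x.succAbove a = x.succAbove b := by
          apply hinj
          have ha := congrFun hw a
          have hb := congrFun hw b
          simp only at ha hb
          rw [ha, hb, hab]
        exact Fin.succAbove_right_injective h2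
      · intro S
        have h3 := hres S
        have h4 : ∀ i, p (x.succAbove i) = r i := fun i => congrFun hw i
        simp only [h4] at h3
        exact h3
  rw [Finset.sum_congr rfl (fun r _ => hterm r)]
  rw [← Finset.sum_filter]
  rw [Finset.sum_const, smul_eq_mul, strongCount_def, Nat.card_eq_fintype_card,
    Fintype.card_subtype, mul_comm]

end Glynn3
namespace Glynn3

open Glynn Glynn2

variable {q k : ℕ}

lemma two_le_card {α : Type*} {s : Finset α} {a b : α} (hab : a ≠ b) (ha : a ∈ s)
    (hb : b ∈ s) : 2 ≤ s.card :=
  Finset.one_lt_card.mpr ⟨a, ha, b, hb, hab⟩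

lemma map_triple (x : Fin (k+1)) (a b i : Fin k) :
    ({a, b, i} : Finset (Fin k)).map (Fin.succAboveEmb x) =
      {x.succAbove a, x.succAbove b, x.succAbove i} := by
  simp [Finset.map_insert, Fin.succAboveEmb_apply]

/-- the plane line determined by a full line through `x`, together with its
characterizing property. -/
lemma fullLine_line (Pl : ProjPlane q) {f : Finset (Fin (k+1)) → Bool} {x : Fin (k+1)}
    (hf : IsLSF f) {r : Fin k → Pl.Point} (hr : Strong Pl (drop f x) r)
    {T : Finset (Fin (k+1))} (hT : IsFullLine f T) (hxT : x ∈ T) :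
    ∃ ℓ ∈ Pl.L, (∃ a b : Fin k, a ≠ b ∧ x.succAbove a ∈ T ∧ x.succAbove b ∈ T ∧
      r a ∈ ℓ ∧ r b ∈ ℓ) ∧ (∀ i, (x.succAbove i ∈ T ↔ r i ∈ ℓ)) := by
  classical
  have hcard : 2 ≤ (T.erase x).card := by
    have := Finset.card_erase_of_mem hxT
    have h3 := hT.1
    omega
  obtain ⟨a', ha', b', hb', hab'⟩ := Finset.one_lt_card.mp hcard
  have ha'x : a' ≠ x := (Finset.mem_erase.mp ha').1
  have hb'x : b' ≠ x := (Finset.mem_erase.mp hb').1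
  have ha'T : a' ∈ T := (Finset.mem_erase.mp ha').2
  have hb'T : b' ∈ T := (Finset.mem_erase.mp hb').2
  obtain ⟨a, ha⟩ := Fin.exists_succAbove_eq ha'x
  obtain ⟨b, hb⟩ := Fin.exists_succAbove_eq hb'x
  have hab : a ≠ b := by
    intro h
    rw [h, hb] at ha
    exact hab' ha.symm
  have hrab : r a ≠ r b := fun h => hab (hr.1 h)
  obtain ⟨ℓ, ⟨hℓL, hra, hrb⟩, huniq⟩ := Pl.unique_line (r a) (r b) hrab
  have key : ∀ i, (x.succAbove i ∈ T ↔ r i ∈ ℓ) := by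
    intro i
    constructor
    · intro hiT
      have htrue : drop f x {a, b, i} = true := by
        rw [drop, map_triple]
        apply hf.1 T
        · intro j hj
          simp only [Finset.mem_insert, Finset.mem_singleton] at hj
          rcases hj with rfl | rfl | rfl
          · rw [ha]; exact ha'T
          · rw [hb]; exact hb'T
          · exact hiT
        · exact hT.2.1
      obtain ⟨ℓ', hℓ', hall⟩ := (hr.2 _).mp htrue
      have hℓeq : ℓ' = ℓ := huniq ℓ' ⟨hℓ', hall a (by simp), hall b (by simp)⟩
      rw [← hℓeq]
      exact hall i (by simp)
    · intro hiℓ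
      have htrue : drop f x {a, b, i} = true := by
        apply (hr.2 _).mpr
        refine ⟨ℓ, hℓL, ?_⟩
        intro j hj
        simp only [Finset.mem_insert, Finset.mem_singleton] at hj
        rcases hj with rfl | rfl | rfl <;> assumption
      rw [drop, map_triple] at htrue
      have hunion := hf.2.2 T _ hT.2.1 htrue (by
        apply two_le_card hab'
        · rw [Finset.mem_inter]
          exact ⟨ha'T, by rw [← ha]; simp⟩
        · rw [Finset.mem_inter]
          exact ⟨hb'T, by rw [← hb]; simp [← hb]⟩)
      have := hT.2.2 _ Finset.subset_union_left hunion
      have hsub : ({x.succAbove a, x.succAbove b, x.succAbove i} : Finset (Fin (k+1))) ⊆ T := by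
        rw [← this]
        exact Finset.subset_union_right
      exact hsub (by simp)
  refine ⟨ℓ, hℓL, ⟨a, b, hab, ?_, ?_, hra, hrb⟩, key⟩
  · rw [ha]; exact ha'T
  · rw [hb]; exact hb'T

lemma le_card_point (Pl : ProjPlane q) {r : Fin k → Pl.Point}
    (hr : Function.Injective r) : k ≤ q ^ 2 + q + 1 := by
  have := Fintype.card_le_of_injective r hr
  rwa [Fintype.card_fin, card_point Pl] at this

lemma cand_card_zero (Pl : ProjPlane q) {f : Finset (Fin (k+1)) → Bool} {x : Fin (k+1)}
    (h0 : FLx f x = ∅) {r : Fin k → Pl.Point} (hr : Strong Pl (drop f x) r) :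
    Nat.card {y : Pl.Point // Cand Pl f x r y} = (q ^ 2 + q + 1) - k := by
  classical
  have hiff : ∀ y : Pl.Point, Cand Pl f x r y ↔ ¬ (y ∈ Set.range r) := by
    intro y
    rw [Cand, h0]
    simp [Set.mem_range, eq_comm]
  rw [Nat.card_eq_fintype_card, Fintype.card_congr (Equiv.subtypeEquivRight hiff),
    Fintype.card_subtype]
  have himg : (Finset.univ.filter (fun y : Pl.Point => y ∈ Set.range r)) =
      Finset.univ.image r := by
    ext y
    simp [Set.mem_range, eq_comm]
  have h1 : (Finset.univ.filter (fun y : Pl.Point => y ∈ Set.range r)).card = k := by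
    rw [himg, Finset.card_image_of_injective _ hr.1, Finset.card_univ, Fintype.card_fin]
  have hsplit := Finset.card_filter_add_card_filter_not
    (s := (Finset.univ : Finset Pl.Point)) (p := fun y => y ∈ Set.range r)
  have h2 : (Finset.univ : Finset Pl.Point).card = q ^ 2 + q + 1 := by
    rw [Finset.card_univ, card_point Pl]
  omega

lemma cand_card_one (Pl : ProjPlane q) {f : Finset (Fin (k+1)) → Bool} {x : Fin (k+1)}
    (hf : IsLSF f) {T : Finset (Fin (k+1))} (h1 : FLx f x = {T})
    {r : Fin k → Pl.Point} (hr : Strong Pl (drop f x) r) :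
    Nat.card {y : Pl.Point // Cand Pl f x r y} = (q + 1) - (T.card - 1) ∧
      T.card - 1 ≤ q + 1 := by
  classical
  have hTmem : T ∈ FLx f x := by rw [h1]; exact Finset.mem_singleton_self T
  have hTfull : IsFullLine f T ∧ x ∈ T := by
    rw [FLx, Finset.mem_filter] at hTmem
    exact hTmem.2
  obtain ⟨ℓ, hℓL, ⟨a, b, hab, haT, hbT, hra, hrb⟩, key⟩ :=
    fullLine_line Pl hf hr hTfull.1 hTfull.2
  have hrab : r a ≠ r b := fun h => hab (hr.1 h)
  have hiff : ∀ y : Pl.Point, Cand Pl f x r y ↔ (y ∈ ℓ ∧ y ∉ Set.range r) := by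
    intro y
    constructor
    · rintro ⟨hnr, hlines⟩
      obtain ⟨ℓ', hℓ', hyℓ', hall⟩ := hlines T hTmem
      have : ℓ' = ℓ := line_eq Pl hℓ' hℓL hrab (hall a haT) (hall b hbT) hra hrb
      refine ⟨this ▸ hyℓ', ?_⟩
      rintro ⟨i, rfl⟩
      exact hnr i rfl
    · rintro ⟨hyℓ, hynr⟩
      refine ⟨fun i hi => hynr ⟨i, hi⟩, ?_⟩
      intro T' hT'
      rw [h1, Finset.mem_singleton] at hT'
      subst hT'
      exact ⟨ℓ, hℓL, hyℓ, fun i hi => (key i).mp hi⟩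
  rw [Nat.card_eq_fintype_card, Fintype.card_congr (Equiv.subtypeEquivRight hiff),
    Fintype.card_subtype]
  have hflt : (Finset.univ.filter (fun y : Pl.Point => y ∈ ℓ ∧ y ∉ Set.range r)) =
      ℓ.toFinset.filter (fun y => y ∉ Set.range r) := by
    ext y
    simp [Set.mem_toFinset]
  rw [hflt]
  have hcardl : ℓ.toFinset.card = q + 1 := by
    rw [← Set.ncard_eq_toFinset_card']
    exact Pl.line_card ℓ hℓL
  have himage : ℓ.toFinset.filter (fun y => y ∈ Set.range r) =
      (Finset.univ.filter (fun i => x.succAbove i ∈ T)).image r := by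
    ext y
    simp only [Finset.mem_filter, Set.mem_toFinset, Finset.mem_image, Finset.mem_univ,
      true_and, Set.mem_range]
    constructor
    · rintro ⟨hyℓ, i, rfl⟩
      exact ⟨i, (key i).mpr hyℓ, rfl⟩
    · rintro ⟨i, hiT, rfl⟩
      exact ⟨(key i).mp hiT, i, rfl⟩
  have hcount : (Finset.univ.filter (fun i => x.succAbove i ∈ T)).card = T.card - 1 := by
    have hmap : (Finset.univ.filter (fun i => x.succAbove i ∈ T)).map (Fin.succAboveEmb x) =
        T.erase x := by
      ext j
      simp only [Finset.mem_map, Finset.mem_filter, Finset.mem_univ, true_and,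
        Fin.succAboveEmb_apply, Finset.mem_erase]
      constructor
      · rintro ⟨i, hi, rfl⟩
        exact ⟨Fin.succAbove_ne x i, hi⟩
      · rintro ⟨hjx, hjT⟩
        obtain ⟨i, hi⟩ := Fin.exists_succAbove_eq hjx
        exact ⟨i, hi.symm ▸ hjT, hi⟩
    have := congrArg Finset.card hmap
    rw [Finset.card_map, Finset.card_erase_of_mem hTfull.2] at this
    exact this
  have himcard : (ℓ.toFinset.filter (fun y => y ∈ Set.range r)).card = T.card - 1 := by
    rw [himage, Finset.card_image_of_injective _ hr.1, hcount]
  have hsplit := Finset.card_filter_add_card_filter_not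
    (s := ℓ.toFinset) (p := fun y => y ∈ Set.range r)
  have hle : T.card - 1 ≤ q + 1 := by
    rw [← himcard, ← hcardl]
    exact Finset.card_filter_le _ _
  constructor
  · omega
  · exact hle

lemma cand_card_two (Pl : ProjPlane q) {f : Finset (Fin (k+1)) → Bool} {x : Fin (k+1)}
    (hf : IsLSF f) {T₁ T₂ : Finset (Fin (k+1))} (hne : T₁ ≠ T₂)
    (h2 : FLx f x = {T₁, T₂}) {r : Fin k → Pl.Point} (hr : Strong Pl (drop f x) r) :
    Nat.card {y : Pl.Point // Cand Pl f x r y} = 1 := by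
  classical
  have hT1mem : T₁ ∈ FLx f x := by rw [h2]; simp
  have hT2mem : T₂ ∈ FLx f x := by rw [h2]; simp
  have hT1 : IsFullLine f T₁ ∧ x ∈ T₁ := by
    rw [FLx, Finset.mem_filter] at hT1mem; exact hT1mem.2
  have hT2 : IsFullLine f T₂ ∧ x ∈ T₂ := by
    rw [FLx, Finset.mem_filter] at hT2mem; exact hT2mem.2
  obtain ⟨ℓ₁, hℓ₁L, ⟨a₁, b₁, hab₁, haT₁, hbT₁, hra₁, hrb₁⟩, key₁⟩ :=
    fullLine_line Pl hf hr hT1.1 hT1.2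
  obtain ⟨ℓ₂, hℓ₂L, ⟨a₂, b₂, hab₂, haT₂, hbT₂, hra₂, hrb₂⟩, key₂⟩ :=
    fullLine_line Pl hf hr hT2.1 hT2.2
  have hrab₁ : r a₁ ≠ r b₁ := fun h => hab₁ (hr.1 h)
  have hrab₂ : r a₂ ≠ r b₂ := fun h => hab₂ (hr.1 h)
  have hT12 : ∀ i : Fin k, x.succAbove i ∈ T₁ → x.succAbove i ∈ T₂ → False := by
    intro i hi1 hi2
    exact hne (fullLine_unique' hf hT1.1 hT2.1 (Fin.succAbove_ne x i).symm
      hT1.2 hi1 hT2.2 hi2)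
  have hℓne : ℓ₁ ≠ ℓ₂ := by
    intro h
    apply hT12 a₂
    · exact (key₁ a₂).mpr (h ▸ hra₂)
    · exact haT₂
  obtain ⟨z, ⟨hz1, hz2⟩, huz⟩ := Pl.unique_point ℓ₁ ℓ₂ hℓ₁L hℓ₂L hℓne
  have hiff : ∀ y : Pl.Point, Cand Pl f x r y ↔ y = z := by
    intro y
    constructor
    · rintro ⟨hnr, hlines⟩
      obtain ⟨ℓ', hℓ', hyℓ', hall⟩ := hlines T₁ hT1mem
      have he1 : ℓ' = ℓ₁ := line_eq Pl hℓ' hℓ₁L hrab₁ (hall a₁ haT₁) (hall b₁ hbT₁) hra₁ hrb₁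
      obtain ⟨ℓ'', hℓ'', hyℓ'', hall2⟩ := hlines T₂ hT2mem
      have he2 : ℓ'' = ℓ₂ := line_eq Pl hℓ'' hℓ₂L hrab₂ (hall2 a₂ haT₂) (hall2 b₂ hbT₂) hra₂ hrb₂
      exact huz y ⟨he1 ▸ hyℓ', he2 ▸ hyℓ''⟩
    · rintro rfl
      refine ⟨?_, ?_⟩
      · intro i hiz
        apply hT12 i
        · exact (key₁ i).mpr (hiz ▸ hz1)
        · exact (key₂ i).mpr (hiz ▸ hz2)
      · intro T' hT'
        rw [h2, Finset.mem_insert, Finset.mem_singleton] at hT'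
        rcases hT' with rfl | rfl
        · exact ⟨ℓ₁, hℓ₁L, hz1, fun i hi => (key₁ i).mp hi⟩
        · exact ⟨ℓ₂, hℓ₂L, hz2, fun i hi => (key₂ i).mp hi⟩
  rw [Nat.card_eq_fintype_card, Fintype.card_congr (Equiv.subtypeEquivRight hiff)]
  exact Fintype.card_subtype_eq z

end Glynn3
namespace Glynn3

open Glynn Glynn2 Polynomial

variable {q k : ℕ}

/-- The polynomial giving the number of candidate positions. -/
noncomputable def cpoly (f : Finset (Fin (k+1)) → Bool) (x : Fin (k+1)) : Polynomial ℤ :=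
  if (FLx f x).card = 0 then X ^ 2 + X + C (1 - (k : ℤ))
  else if (FLx f x).card = 1 then
    X + C (2 - ((FLx f x).sum (fun S => (S.card : ℤ))))
  else 1

lemma f_mem_Gset (f : Finset (Fin (k+1)) → Bool) (x : Fin (k+1)) : f ∈ Gset f x := by
  rw [Gset, Finset.mem_filter]
  exact ⟨Finset.mem_univ _, fun S _ => rfl, fun S h => h⟩

lemma count_key (Pl : ProjPlane q) {f : Finset (Fin (k+1)) → Bool} {x : Fin (k+1)}
    (hf : IsLSF f) (hx : pointIndex f x ≤ 2) :
    (strongCount Pl f : ℤ) =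
      (cpoly f x).eval (q : ℤ) * (strongCount Pl (drop f x) : ℤ)
        - ∑ g ∈ (Gset f x).erase f, (strongCount Pl g : ℤ) := by
  classical
  have hsum : (strongCount Pl f : ℤ) + ∑ g ∈ (Gset f x).erase f, (strongCount Pl g : ℤ)
      = (Nat.card {p : Fin (k+1) → Pl.Point // Wpred Pl f x p} : ℤ) := by
    rw [cardW_eq_sum Pl hf]
    push_cast
    exact_mod_cast Finset.add_sum_erase _ (fun g => (strongCount Pl g : ℤ)) (f_mem_Gset f x)
  by_cases hA : strongCount Pl (drop f x) = 0
  · have hemp : IsEmpty {r : Fin k → Pl.Point // Strong Pl (drop f x) r} := by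
      rw [strongCount_def, Nat.card_eq_fintype_card, Fintype.card_eq_zero_iff] at hA
      exact hA
    have hW : Nat.card {p : Fin (k+1) → Pl.Point // Wpred Pl f x p} = 0 := by
      rw [cardW_eq_c Pl 0 (fun r hrs => (hemp.false ⟨r, hrs⟩).elim)]
      exact zero_mul _
    rw [hW] at hsum
    push_cast at hsum
    have h1 : (0:ℤ) ≤ (strongCount Pl f : ℤ) := by positivity
    have h2 : (0:ℤ) ≤ ∑ g ∈ (Gset f x).erase f, (strongCount Pl g : ℤ) :=
      Finset.sum_nonneg (fun g _ => by positivity)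
    have hf0 : (strongCount Pl f : ℤ) = 0 := by linarith
    have hSz : ∑ g ∈ (Gset f x).erase f, (strongCount Pl g : ℤ) = 0 := by linarith
    rw [hf0, hSz, hA]
    push_cast
    ring
  · obtain ⟨⟨⟨r₀, hr₀⟩⟩, -⟩ := Nat.card_ne_zero.mp (by rwa [strongCount_def] at hA)
    have hcard : (FLx f x).card ≤ 2 := by rw [FLx_card]; exact hx
    have hcases : (FLx f x).card = 0 ∨ (FLx f x).card = 1 ∨ (FLx f x).card = 2 := by omega
    rcases hcases with hc0 | hc1 | hc2
    · have h0 : FLx f x = ∅ := Finset.card_eq_zero.mp hc0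
      have hW := cardW_eq_c Pl ((q ^ 2 + q + 1) - k) (fun r hrs => cand_card_zero Pl h0 hrs)
      have hk : k ≤ q ^ 2 + q + 1 := le_card_point Pl hr₀.1
      rw [hW] at hsum
      have heval : (cpoly f x).eval (q : ℤ) = (q : ℤ) ^ 2 + q + 1 - k := by
        rw [cpoly, if_pos hc0]
        simp only [eval_add, eval_pow, eval_X, eval_C]
        ring
      rw [heval]
      push_cast [Nat.cast_sub hk] at hsum
      linarith [hsum]
    · obtain ⟨T, hT⟩ := Finset.card_eq_one.mp hc1
      have hTmem : T ∈ FLx f x := by rw [hT]; exact Finset.mem_singleton_self T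
      have h3 : 3 ≤ T.card := by
        rw [FLx, Finset.mem_filter] at hTmem
        exact hTmem.2.1.1
      have hW := cardW_eq_c Pl ((q + 1) - (T.card - 1))
        (fun r hrs => (cand_card_one Pl hf hT hrs).1)
      have hbd : T.card - 1 ≤ q + 1 := (cand_card_one Pl hf hT hr₀).2
      rw [hW] at hsum
      have heval : (cpoly f x).eval (q : ℤ) = (q : ℤ) + (2 - T.card) := by
        rw [cpoly, if_neg (by omega), if_pos hc1, hT, Finset.sum_singleton]
        simp only [eval_add, eval_X, eval_C]
      rw [heval]
      push_cast [Nat.cast_sub hbd, Nat.cast_sub (show 1 ≤ T.card by omega)] at hsum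
      linarith [hsum]
    · obtain ⟨T₁, T₂, hne, hT⟩ := Finset.card_eq_two.mp hc2
      have hW := cardW_eq_c Pl 1 (fun r hrs => cand_card_two Pl hf hne hT hrs)
      rw [hW] at hsum
      have heval : (cpoly f x).eval (q : ℤ) = 1 := by
        rw [cpoly, if_neg (by omega), if_neg (by omega)]
        simp
      rw [heval]
      push_cast at hsum
      linarith [hsum]

end Glynn3
namespace Glynn4

open Glynn Glynn2 Glynn3 Polynomial

/-- Functions of planes expressible as `p(q) + Σ_f p_f(q)·A_f(Π)` over
superfigurations on at most `n` points. -/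
def Expr (n : ℕ) (F : (q : ℕ) → ProjPlane q → ℤ) : Prop :=
  ∃ (p : Polynomial ℤ) (P : (m : ℕ) → (Finset (Fin m) → Bool) → Polynomial ℤ),
    ∀ (q : ℕ) (Pl : ProjPlane q),
      F q Pl = p.eval (q : ℤ) +
        ∑ m ∈ Finset.range (n + 1),
          ∑ f ∈ Finset.univ.filter
              (fun f : Finset (Fin m) → Bool => IsSuperfiguration f),
            (P m f).eval (q : ℤ) * (strongCount Pl f : ℤ)

lemma Expr.congr {n : ℕ} {F G : (q : ℕ) → ProjPlane q → ℤ}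
    (h : ∀ q Pl, F q Pl = G q Pl) (hG : Expr n G) : Expr n F := by
  obtain ⟨p, P, hP⟩ := hG
  exact ⟨p, P, fun q Pl => (h q Pl).trans (hP q Pl)⟩

lemma Expr.const (n : ℕ) (p : Polynomial ℤ) : Expr n (fun q _ => p.eval (q : ℤ)) := by
  refine ⟨p, fun _ _ => 0, fun q Pl => ?_⟩
  simp

lemma Expr.add {n : ℕ} {F G : (q : ℕ) → ProjPlane q → ℤ} (hF : Expr n F) (hG : Expr n G) :
    Expr n (fun q Pl => F q Pl + G q Pl) := by
  obtain ⟨p₁, P₁, h₁⟩ := hF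
  obtain ⟨p₂, P₂, h₂⟩ := hG
  refine ⟨p₁ + p₂, fun m f => P₁ m f + P₂ m f, fun q Pl => ?_⟩
  dsimp only
  rw [h₁ q Pl, h₂ q Pl]
  simp only [eval_add, add_mul, Finset.sum_add_distrib]
  ring

lemma Expr.smul {n : ℕ} (c : Polynomial ℤ) {F : (q : ℕ) → ProjPlane q → ℤ} (hF : Expr n F) :
    Expr n (fun q Pl => c.eval (q : ℤ) * F q Pl) := by
  obtain ⟨p₁, P₁, h₁⟩ := hF
  refine ⟨c * p₁, fun m f => c * P₁ m f, fun q Pl => ?_⟩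
  dsimp only
  rw [h₁ q Pl]
  simp only [eval_mul, mul_add, Finset.mul_sum, mul_assoc]

lemma Expr.neg {n : ℕ} {F : (q : ℕ) → ProjPlane q → ℤ} (hF : Expr n F) :
    Expr n (fun q Pl => - F q Pl) := by
  have := Expr.smul (Polynomial.C (-1)) hF
  apply Expr.congr (G := fun q Pl => (Polynomial.C (-1)).eval (q:ℤ) * F q Pl) ?_ this
  intro q Pl
  simp

lemma Expr.sub {n : ℕ} {F G : (q : ℕ) → ProjPlane q → ℤ} (hF : Expr n F) (hG : Expr n G) :
    Expr n (fun q Pl => F q Pl - G q Pl) := by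
  have := Expr.add hF (Expr.neg hG)
  apply Expr.congr ?_ this
  intro q Pl
  ring

lemma Expr.sum {n : ℕ} {ι : Type*} (s : Finset ι) (F : ι → (q : ℕ) → ProjPlane q → ℤ)
    (h : ∀ i ∈ s, Expr n (F i)) :
    Expr n (fun q Pl => ∑ i ∈ s, F i q Pl) := by
  classical
  induction s using Finset.induction_on with
  | empty =>
    apply Expr.congr (G := fun q _ => (0 : Polynomial ℤ).eval (q:ℤ))
    · intro q Pl; simp
    · exact Expr.const n 0
  | @insert a s' hx ih =>
    have h1 := h a (Finset.mem_insert_self a s')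
    have h2 := ih (fun i hi => h i (Finset.mem_insert_of_mem hi))
    apply Expr.congr (G := fun q Pl => F a q Pl + ∑ i ∈ s', F i q Pl)
    · intro q Pl
      rw [Finset.sum_insert hx]
    · exact Expr.add h1 h2

lemma Expr.superfig {n m : ℕ} (hm : m ≤ n) {f : Finset (Fin m) → Bool}
    (hsf : IsSuperfiguration f) :
    Expr n (fun q Pl => (strongCount Pl f : ℤ)) := by
  classical
  refine ⟨0, fun m' f' => if (∃ h : m = m',
      ∀ S : Finset (Fin m), f S = f' (S.map (finCongr h).toEmbedding)) then 1 else 0,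
    fun q Pl => ?_⟩
  rw [eval_zero, zero_add]
  symm
  rw [Finset.sum_eq_single_of_mem m (Finset.mem_range.mpr (by omega))]
  · rw [Finset.sum_eq_single_of_mem f (by simp [hsf])]
    · dsimp only
      have hcond : (∃ h : m = m,
          ∀ S : Finset (Fin m), f S = f (S.map (finCongr h).toEmbedding)) :=
        ⟨rfl, fun S => by rw [finCongr_refl, Equiv.refl_toEmbedding, Finset.map_refl]⟩
      rw [if_pos hcond]
      simp
    · intro b _ hb
      dsimp only
      have hcond : ¬ (∃ h : m = m,
          ∀ S : Finset (Fin m), f S = b (S.map (finCongr h).toEmbedding)) := by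
        rintro ⟨h, hall⟩
        apply hb
        funext S
        have h2 := hall S
        rw [finCongr_refl, Equiv.refl_toEmbedding, Finset.map_refl] at h2
        exact h2.symm
      rw [if_neg hcond]
      simp
  · intro b _ hb
    apply Finset.sum_eq_zero
    intro f' _
    dsimp only
    have hcond : ¬ (∃ h : m = b,
        ∀ S : Finset (Fin m), f S = f' (S.map (finCongr h).toEmbedding)) := by
      rintro ⟨h, -⟩
      exact hb h.symm
    rw [if_neg hcond]
    simp

end Glynn4
namespace Glynn4

open Glynn Glynn2 Glynn3 Polynomial

lemma strongCount_m0 {q : ℕ} (Pl : ProjPlane q) (f : Finset (Fin 0) → Bool) :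
    strongCount Pl f = if f ∅ = true then 1 else 0 := by
  classical
  rw [strongCount_def]
  have hS : ∀ S : Finset (Fin 0), S = ∅ :=
    fun S => Finset.eq_empty_of_forall_notMem (fun i _ => i.elim0)
  by_cases h : f ∅ = true
  · rw [if_pos h, Nat.card_eq_one_iff_unique]
    obtain ⟨ℓ, hℓ⟩ := L_nonempty Pl
    constructor
    · constructor
      rintro ⟨p₁, h₁⟩ ⟨p₂, h₂⟩
      apply Subtype.ext
      funext i
      exact i.elim0
    · refine ⟨⟨fun i => i.elim0, by intro a b _; exact a.elim0, ?_⟩⟩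
      intro S
      rw [hS S]
      exact iff_of_true h ⟨ℓ, hℓ, fun i _ => i.elim0⟩
  · rw [if_neg h]
    have : IsEmpty {p : Fin 0 → Pl.Point // Strong Pl f p} := by
      constructor
      rintro ⟨p, hinj, hstr⟩
      obtain ⟨ℓ, hℓ⟩ := L_nonempty Pl
      exact h ((hstr ∅).mpr ⟨ℓ, hℓ, fun i hi => absurd hi (by simp)⟩)
    exact Nat.card_of_isEmpty

noncomputable def falseCount {m : ℕ} (f : Finset (Fin m) → Bool) : ℕ :=
  (Finset.univ.filter (fun S => f S = false)).card

lemma falseCount_lt {m : ℕ} {f g : Finset (Fin m) → Bool}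
    (hle : ∀ S, f S = true → g S = true) (hne : g ≠ f) :
    falseCount g < falseCount f := by
  classical
  apply Finset.card_lt_card
  have hsub : (Finset.univ.filter (fun S => g S = false)) ⊆
      (Finset.univ.filter (fun S => f S = false)) := by
    intro S hSmem
    rw [Finset.mem_filter] at hSmem ⊢
    refine ⟨Finset.mem_univ _, ?_⟩
    by_contra hf
    simp only [Bool.not_eq_false] at hf
    rw [hle S hf] at hSmem
    simp at hSmem
  rw [Finset.ssubset_iff_of_subset hsub]
  obtain ⟨S, hSne⟩ := Function.ne_iff.mp hne
  have hfS : f S = false := by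
    by_contra hf
    simp only [Bool.not_eq_false] at hf
    rw [hle S hf] at hSne
    exact hSne hf.symm
  have hgS : g S = true := by
    cases hg : g S
    · rw [hg, hfS] at hSne; simp at hSne
    · rfl
  refine ⟨S, ?_, ?_⟩
  · rw [Finset.mem_filter]; exact ⟨Finset.mem_univ _, hfS⟩
  · rw [Finset.mem_filter]
    simp [hgS]

lemma step {n k : ℕ} (hm : k + 1 ≤ n) (f : Finset (Fin (k+1)) → Bool)
    (IHprev : ∀ f' : Finset (Fin k) → Bool, Expr n (fun q Pl => (strongCount Pl f' : ℤ)))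
    (IHinner : ∀ g : Finset (Fin (k+1)) → Bool, falseCount g < falseCount f →
      Expr n (fun q Pl => (strongCount Pl g : ℤ))) :
    Expr n (fun q Pl => (strongCount Pl f : ℤ)) := by
  classical
  by_cases hLSF : IsLSF f
  · by_cases hsf : IsSuperfiguration f
    · exact Expr.superfig hm hsf
    · have hx : ∃ x, pointIndex f x ≤ 2 := by
        rw [IsSuperfiguration] at hsf
        push_neg at hsf
        obtain ⟨x, hx⟩ := hsf hLSF
        exact ⟨x, by omega⟩
      obtain ⟨x, hx⟩ := hx
      apply Expr.congr
        (G := fun q Pl => (cpoly f x).eval (q:ℤ) * (strongCount Pl (drop f x) : ℤ)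
          - ∑ g ∈ (Gset f x).erase f, (strongCount Pl g : ℤ))
      · intro q Pl
        exact count_key Pl hLSF hx
      · apply Expr.sub
        · exact Expr.smul _ (IHprev (drop f x))
        · apply Expr.sum
          intro g hg
          have hgG := Finset.mem_of_mem_erase hg
          rw [Gset, Finset.mem_filter] at hgG
          exact IHinner g (falseCount_lt hgG.2.2 (Finset.ne_of_mem_erase hg))
  · apply Expr.congr (G := fun q _ => (0 : Polynomial ℤ).eval (q:ℤ))
    · intro q Pl
      rw [strongCount_eq_zero_of_not_LSF Pl hLSF]
      simp
    · exact Expr.const n 0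

lemma main (n : ℕ) : ∀ m, m ≤ n → ∀ f : Finset (Fin m) → Bool,
    Expr n (fun q Pl => (strongCount Pl f : ℤ)) := by
  intro m
  induction m with
  | zero =>
    intro _ f
    by_cases h : f ∅ = true
    · apply Expr.congr (G := fun q _ => (1 : Polynomial ℤ).eval (q:ℤ)) ?_ (Expr.const n 1)
      intro q Pl
      rw [strongCount_m0 Pl f, if_pos h]
      simp
    · apply Expr.congr (G := fun q _ => (0 : Polynomial ℤ).eval (q:ℤ)) ?_ (Expr.const n 0)
      intro q Pl
      rw [strongCount_m0 Pl f, if_neg h]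
      simp
  | succ k ih =>
    intro hm
    have hk := ih (by omega)
    have inner : ∀ c (f : Finset (Fin (k+1)) → Bool), falseCount f ≤ c →
        Expr n (fun q Pl => (strongCount Pl f : ℤ)) := by
      intro c
      induction c with
      | zero =>
        intro f hfc
        exact step hm f hk (fun g hg => absurd (lt_of_lt_of_le hg hfc) (Nat.not_lt_zero _))
      | succ c ihc =>
        intro f hfc
        exact step hm f hk (fun g hg => ihc g (by omega))
    intro f
    exact inner (falseCount f) f le_rfl

lemma collinear_def {q : ℕ} (Pl : ProjPlane q) (s : Set Pl.Point) :
    Pl.Collinear s ↔ ∃ ℓ ∈ Pl.L, s ⊆ ℓ := Iff.rfl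

lemma nArcs_eq {q : ℕ} (Pl : ProjPlane q) (n : ℕ) :
    Pl.nArcs n = strongCount Pl (fun S : Finset (Fin n) => decide (S.card ≤ 2)) := by
  classical
  rw [ProjPlane.nArcs, strongCount]
  apply Nat.card_congr
  apply Equiv.subtypeEquivRight
  intro p
  constructor
  · rintro ⟨hp, h3⟩
    refine ⟨hp, fun S => ?_⟩
    rw [decide_eq_true_eq]
    constructor
    · intro hS2
      exact realized_small Pl hp hS2
    · rintro ⟨ℓ, hℓ, hall⟩
      by_contra hcard
      push_neg at hcard
      obtain ⟨a, b, c, ha, hb, hc, hab, hac, hbc⟩ := Finset.two_lt_card_iff.mp hcard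
      apply h3 a b c hab hac hbc
      rw [collinear_def]
      refine ⟨ℓ, hℓ, ?_⟩
      intro z hz
      simp only [Set.mem_insert_iff, Set.mem_singleton_iff] at hz
      rcases hz with rfl | rfl | rfl
      · exact hall a ha
      · exact hall b hb
      · exact hall c hc
  · rintro ⟨hp, hiff⟩
    refine ⟨hp, fun i j k hij hik hjk hcol => ?_⟩
    rw [collinear_def] at hcol
    obtain ⟨ℓ, hℓ, hsub⟩ := hcol
    have h1 := (hiff {i, j, k}).mpr ⟨ℓ, hℓ, by
      intro a ha
      simp only [Finset.mem_insert, Finset.mem_singleton] at ha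
      rcases ha with rfl | rfl | rfl
      · exact hsub (by simp)
      · exact hsub (by simp)
      · exact hsub (by simp)⟩
    rw [decide_eq_true_eq] at h1
    have hcard : ({i, j, k} : Finset (Fin n)).card = 3 := by
      rw [Finset.card_insert_of_notMem (by simp [hij, hik]),
        Finset.card_insert_of_notMem (by simp [hjk]), Finset.card_singleton]
    omega

end Glynn4
/-- Glynn's theorem: for each `n` there are integer polynomials `p` and `p_f`
(for superfigurations `f` on at most `n` points) such that for every finite
projective plane `Π` of order `q`,
`C_n(Π) = p(q) + Σ_f p_f(q)·A_f(Π)`. -/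
theorem glynn_formula (n : ℕ) (hn : 0 < n) :
    ∃ (p : Polynomial ℤ)
      (P : (m : ℕ) → (Finset (Fin m) → Bool) → Polynomial ℤ),
      ∀ (q : ℕ) (Pl : ProjPlane q),
        (Pl.nArcs n : ℤ) = p.eval (q : ℤ) +
          ∑ m ∈ Finset.range (n + 1),
            ∑ f ∈ Finset.univ.filter
                (fun f : Finset (Fin m) → Bool => IsSuperfiguration f),
              (P m f).eval (q : ℤ) * (strongCount Pl f : ℤ) := by
  obtain ⟨p, P, h⟩ := Glynn4.main n n le_rfl (fun S : Finset (Fin n) => decide (S.card ≤ 2))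
  refine ⟨p, P, fun q Pl => ?_⟩
  rw [Glynn4.nArcs_eq Pl n]
  exact h q Pl
end
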